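/- arXiv:2508.02798 — 6 statements merged into one kernel-verified Lean document; each statement's English description precedes it below -/
import Mathlib

section
/- Let K ⊂ ℝ^d be a porous compact set. Then there exist constants 0 ≤ λ < d and C_λ > 0 such that for every cube R ⊂ ℝ^d and every 0 < ℓ < ℓ(R)/4, the number N of pairwise disjoint axis-parallel cubes Q of edge length ℓ that intersect K ∩ R satisfies N ≤ C_λ (ℓ(R)/ℓ)^λ. -/
open Set Metric MeasureTheory

/-- `K` is porous with porosity constant `c`. -/
def IsPorous {d : ℕ} (K : Set (EuclideanSpace ℝ (Fin d))) (c : ℝ) : Prop :=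
  ∀ (x : EuclideanSpace ℝ (Fin d)) (r : ℝ), 0 < r →
    ∃ (y : EuclideanSpace ℝ (Fin d)) (r' : ℝ), 0 < r' ∧
      ball y r' ⊆ ball x r ∧ ball y r' ∩ K = ∅ ∧
      ENNReal.ofReal c * volume (ball x r) ≤ volume (ball y r')

/-- The (half-open) axis-parallel cube with corner `a` and edge length `ℓ`. -/
def cube {d : ℕ} (a : Fin d → ℝ) (ℓ : ℝ) : Set (EuclideanSpace ℝ (Fin d)) :=
  {x | ∀ i, x i ∈ Ico (a i) (a i + ℓ)}

lemma mem_cube {d : ℕ} {a : Fin d → ℝ} {ℓ : ℝ} {x : EuclideanSpace ℝ (Fin d)} :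
    x ∈ cube a ℓ ↔ ∀ i, a i ≤ x i ∧ x i < a i + ℓ := Iff.rfl

lemma cube_subset_cube {d : ℕ} {a a' : Fin d → ℝ} {ℓ ℓ' : ℝ}
    (h : ∀ i, a i ≤ a' i ∧ a' i + ℓ' ≤ a i + ℓ) : cube a' ℓ' ⊆ cube a ℓ := by
  intro x hx i
  rcases hx i with ⟨h1, h2⟩
  exact ⟨(h i).1.trans h1, lt_of_lt_of_le h2 (h i).2⟩

lemma abs_coord_le_dist {d : ℕ} (x y : EuclideanSpace ℝ (Fin d)) (i : Fin d) :
    |x i - y i| ≤ dist x y := by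
  rw [EuclideanSpace.dist_eq]
  have h : |x i - y i| = Real.sqrt (dist (x i) (y i) ^ 2) := by
    rw [Real.sqrt_sq_eq_abs, Real.dist_eq, abs_abs]
  rw [h]
  exact Real.sqrt_le_sqrt (Finset.single_le_sum (f := fun j => dist (x j) (y j) ^ 2)
    (fun j _ => sq_nonneg _) (Finset.mem_univ i))

/-- In every axis-parallel cube of side `s` there is a subcube of side `s/M`
(from the `M^d` grid subdivision) that misses `K`. -/
lemma hole_exists {d : ℕ} (hd : 0 < d) {c : ℝ} (hc0 : 0 < c)
    {K : Set (EuclideanSpace ℝ (Fin d))} (hK : IsPorous K c) {M : ℕ}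
    (hM0 : 0 < M) (hMγ : 2 * Real.sqrt d / c ^ ((d : ℝ)⁻¹) ≤ M)
    (a : Fin d → ℝ) (s : ℝ) (hs : 0 < s) :
    ∃ w : Fin d → ℕ, (∀ i, w i < M) ∧
      cube (fun i => a i + s / M * w i) (s / M) ∩ K = ∅ := by
  haveI : Nonempty (Fin d) := Fin.pos_iff_nonempty.mp hd
  set γ : ℝ := c ^ ((d : ℝ)⁻¹) with hγdef
  have hγ0 : 0 < γ := Real.rpow_pos_of_pos hc0 _
  have hγd : γ ^ d = c := by
    rw [hγdef, ← Real.rpow_natCast (c ^ ((d : ℝ)⁻¹)) d, ← Real.rpow_mul hc0.le,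
      inv_mul_cancel₀ (by exact_mod_cast hd.ne'), Real.rpow_one]
  set x : EuclideanSpace ℝ (Fin d) := WithLp.toLp 2 (fun i => a i + s / 2) with hxdef
  obtain ⟨y, r', hr', hsub, hempty, hvol⟩ := hK x (s / 2) (by positivity)
  -- lower bound on r'
  have hV0 : volume (ball (0 : EuclideanSpace ℝ (Fin d)) 1) ≠ 0 :=
    (measure_ball_pos volume 0 one_pos).ne'
  have hVt : volume (ball (0 : EuclideanSpace ℝ (Fin d)) 1) ≠ ⊤ := measure_ball_lt_top.ne
  rw [Measure.addHaar_ball volume x (by positivity : (0:ℝ) ≤ s / 2),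
    Measure.addHaar_ball volume y hr'.le, finrank_euclideanSpace_fin,
    ← mul_assoc, ← ENNReal.ofReal_mul hc0.le] at hvol
  have hcs : c * (s / 2) ^ d ≤ r' ^ d := by
    have h2 := (ENNReal.mul_le_mul_iff_left hV0 hVt).mp hvol
    rwa [ENNReal.ofReal_le_ofReal_iff (by positivity)] at h2
  have hr'γ : γ * (s / 2) ≤ r' := by
    have h3 : (γ * (s / 2)) ^ d ≤ r' ^ d := by
      rw [mul_pow, hγd]; exact hcs
    exact le_of_pow_le_pow_left₀ hd.ne' hr'.le h3
  -- y is in the open cube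
  have hyx : y ∈ ball x (s / 2) := hsub (mem_ball_self hr')
  have hyc : ∀ i, a i < y i ∧ y i < a i + s := by
    intro i
    have h4 : |y i - x i| < s / 2 := lt_of_le_of_lt (abs_coord_le_dist y x i) hyx
    have h5 : x i = a i + s / 2 := rfl
    rw [abs_lt, h5] at h4
    constructor <;> linarith [h4.1, h4.2]
  have hsM : (0:ℝ) < s / M := by positivity
  refine ⟨fun i => ⌊(y i - a i) / (s / M)⌋₊, ?_, ?_⟩
  · intro i
    have hnum : 0 ≤ (y i - a i) / (s / M) := le_of_lt (div_pos (by linarith [(hyc i).1]) hsM)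
    rw [Nat.floor_lt hnum, div_lt_iff₀ hsM]
    have hMs : (M : ℝ) * (s / M) = s := by field_simp
    linarith [(hyc i).2]
  · -- the hole cube is inside ball y r'
    apply Set.eq_empty_of_subset_empty
    rw [← hempty]
    apply Set.inter_subset_inter_left
    intro z hz
    rw [mem_ball]
    have hcoord : ∀ i, |z i - y i| < s / M := by
      intro i
      obtain ⟨h61, h62⟩ := hz i
      have hfl : (s / M) * (⌊(y i - a i) / (s / M)⌋₊ : ℝ) ≤ y i - a i := by
        rw [mul_comm, ← le_div_iff₀ hsM]
        exact Nat.floor_le (le_of_lt (div_pos (by linarith [(hyc i).1]) hsM))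
      have hfu : y i - a i < (s / M) * (⌊(y i - a i) / (s / M)⌋₊ : ℝ) + s / M := by
        have := Nat.lt_floor_add_one ((y i - a i) / (s / M))
        rw [div_lt_iff₀ hsM] at this
        linarith [this]
      rw [abs_lt]
      constructor
      · linarith
      · linarith
    have hdistlt : dist z y < Real.sqrt d * (s / M) := by
      rw [EuclideanSpace.dist_eq]
      have hsum : ∑ i, dist (z i) (y i) ^ 2 < d * (s / M) ^ 2 := by
        have := Finset.sum_lt_sum_of_nonempty (Finset.univ_nonempty (α := Fin d))
          (fun i _ => by
            have : dist (z i) (y i) < s / M := by rw [Real.dist_eq]; exact hcoord i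
            exact pow_lt_pow_left₀ this dist_nonneg two_ne_zero)
        simpa [Finset.sum_const, Finset.card_univ, nsmul_eq_mul] using this
      calc Real.sqrt (∑ i, dist (z i) (y i) ^ 2) < Real.sqrt (d * (s / M) ^ 2) :=
            Real.sqrt_lt_sqrt (Finset.sum_nonneg fun i _ => sq_nonneg _) hsum
        _ = Real.sqrt d * (s / M) := by
            rw [Real.sqrt_mul (Nat.cast_nonneg d), Real.sqrt_sq hsM.le]
    have hfin : Real.sqrt d * (s / M) ≤ r' := by
      have h7 : 2 * Real.sqrt d ≤ γ * M := by
        rw [div_le_iff₀ hγ0] at hMγ; linarith [hMγ]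
      have hMpos : (0:ℝ) < M := by exact_mod_cast hM0
      have hMs : (M : ℝ) * (s / M) = s := by field_simp
      nlinarith [mul_le_mul_of_nonneg_right h7 hsM.le, hMs, hγ0.le, hs.le]
    exact lt_of_lt_of_le hdistlt hfin

lemma key_id {M : ℕ} (hM : 0 < M) (s : ℝ) (hs : s ≠ 0) (n : ℕ) :
    s / (M : ℝ) * (n : ℝ) = s * ((n / M : ℕ) : ℝ) + s / M * ((n % M : ℕ) : ℝ) := by
  have hMR : ((M : ℝ)) ≠ 0 := Nat.cast_ne_zero.mpr hM.ne'
  have hdm : (M : ℝ) * ((n / M : ℕ) : ℝ) + ((n % M : ℕ) : ℝ) = (n : ℝ) := by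
    exact_mod_cast Nat.div_add_mod n M
  have hMs : (M : ℝ) * (s / M) = s := by field_simp
  calc s / M * (n : ℝ) = s / M * ((M : ℝ) * ((n / M : ℕ) : ℝ) + ((n % M : ℕ) : ℝ)) := by
        rw [hdm]
    _ = (M : ℝ) * (s / M) * ((n / M : ℕ) : ℝ) + s / M * ((n % M : ℕ) : ℝ) := by ring
    _ = s * ((n / M : ℕ) : ℝ) + s / M * ((n % M : ℕ) : ℝ) := by rw [hMs]

/-- Counting grid cubes meeting `K`: with an `M`-adic hole in every cube, the number of
level-`k` grid subcubes (of a cube of side `L`) meeting `K` is at most `(M^d - 1)^k`. -/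
lemma grid_count {d M : ℕ} (hM : 0 < M) (K : Set (EuclideanSpace ℝ (Fin d)))
    (hole : ∀ (a : Fin d → ℝ) (s : ℝ), 0 < s → ∃ w : Fin d → ℕ, (∀ i, w i < M) ∧
      cube (fun i => a i + s / M * w i) (s / M) ∩ K = ∅)
    (b : Fin d → ℝ) (L : ℝ) (hL : 0 < L) :
    ∀ (k : ℕ) (A : Finset (Fin d → ℕ)),
      (∀ v ∈ A, (∀ i, v i < M ^ k) ∧
        (cube (fun i => b i + L / (M : ℝ) ^ k * v i) (L / (M : ℝ) ^ k) ∩ K).Nonempty) →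
      A.card ≤ (M ^ d - 1) ^ k := by
  intro k
  induction k with
  | zero =>
    intro A hA
    simp only [pow_zero]
    rw [Finset.card_le_one]
    intro v hv v' hv'
    funext i
    have h1 := ((hA v hv).1 i)
    have h2 := ((hA v' hv').1 i)
    simp only [pow_zero, Nat.lt_one_iff] at h1 h2
    rw [h1, h2]
  | succ k ih =>
    intro A hA
    set s : ℝ := L / (M : ℝ) ^ k with hsdef
    have hs : 0 < s := by positivity
    have hMR : (0:ℝ) < M := by exact_mod_cast hM
    have hss : L / (M : ℝ) ^ (k + 1) = s / M := by
      rw [hsdef, pow_succ, ← div_div]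
    choose w hwlt hwempty using fun u : Fin d → ℕ => hole (fun i => b i + s * u i) s hs
    classical
    set A' : Finset (Fin d → ℕ) := A.image (fun v i => v i / M) with hA'def
    have hsub : A ⊆ A'.biUnion (fun u =>
        ((Fintype.piFinset fun _ : Fin d => Finset.range M).erase (w u)).image
          (fun r i => M * u i + r i)) := by
      intro v hv
      rw [Finset.mem_biUnion]
      refine ⟨fun i => v i / M, Finset.mem_image_of_mem _ hv, ?_⟩
      rw [Finset.mem_image]
      refine ⟨fun i => v i % M, ?_, ?_⟩
      · rw [Finset.mem_erase]
        constructor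
        · -- residue is not the hole residue
          intro hcontra
          have hne := (hA v hv).2
          have hcorner : (fun i => b i + L / (M : ℝ) ^ (k+1) * v i) =
              (fun i => (b i + s * (v i / M : ℕ)) + s / M * (w (fun i => v i / M)) i) := by
            funext i
            rw [hss, ← hcontra]
            have hkey := key_id hM s hs.ne' (v i)
            linarith [hkey]
          rw [hcorner, hss] at hne
          rw [hwempty (fun i => v i / M)] at hne
          exact Set.not_nonempty_empty hne
        · rw [Fintype.mem_piFinset]
          intro i
          rw [Finset.mem_range]
          exact Nat.mod_lt _ hM
      · funext i
        exact Nat.div_add_mod (v i) M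
    have hA'h : ∀ u ∈ A', (∀ i, u i < M ^ k) ∧
        (cube (fun i => b i + s * u i) s ∩ K).Nonempty := by
      intro u hu
      rw [hA'def, Finset.mem_image] at hu
      obtain ⟨v, hv, rfl⟩ := hu
      constructor
      · intro i
        rw [Nat.div_lt_iff_lt_mul hM, ← pow_succ]
        exact (hA v hv).1 i
      · apply Set.Nonempty.mono _ (hA v hv).2
        apply Set.inter_subset_inter_left
        apply cube_subset_cube
        intro i
        have hkey := key_id hM s hs.ne' (v i)
        have hrem : ((v i % M : ℕ) : ℝ) + 1 ≤ M := by
          have h := Nat.mod_lt (v i) hM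
          exact_mod_cast Nat.succ_le_of_lt h
        have hrem0 : (0:ℝ) ≤ ((v i % M : ℕ) : ℝ) := Nat.cast_nonneg _
        have hsM0 : (0:ℝ) ≤ s / M := (div_pos hs hMR).le
        have h1 : (0:ℝ) ≤ s / M * ((v i % M : ℕ) : ℝ) := mul_nonneg hsM0 hrem0
        have h2 : s / M * (((v i % M : ℕ) : ℝ) + 1) ≤ s / M * M :=
          mul_le_mul_of_nonneg_left hrem hsM0
        have h3 : s / M * (M : ℝ) = s := by field_simp
        rw [hss]
        constructor
        · linarith [hkey, h1]
        · linarith [hkey, h2, h3]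
    calc A.card ≤ _ := Finset.card_le_card hsub
      _ ≤ ∑ u ∈ A', (((Fintype.piFinset fun _ : Fin d => Finset.range M).erase (w u)).image
          (fun r i => M * u i + r i)).card := Finset.card_biUnion_le
      _ ≤ ∑ u ∈ A', (M ^ d - 1) := by
          apply Finset.sum_le_sum
          intro u _
          calc _ ≤ ((Fintype.piFinset fun _ : Fin d => Finset.range M).erase (w u)).card :=
                Finset.card_image_le
            _ = (Fintype.piFinset fun _ : Fin d => Finset.range M).card - 1 :=
                Finset.card_erase_of_mem (by
                  rw [Fintype.mem_piFinset]
                  intro i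
                  rw [Finset.mem_range]
                  exact hwlt u i)
            _ = M ^ d - 1 := by
                rw [Fintype.card_piFinset]
                simp [Finset.card_range, Finset.prod_const, Finset.card_univ]
      _ = A'.card * (M ^ d - 1) := by rw [Finset.sum_const, smul_eq_mul]
      _ ≤ (M ^ d - 1) ^ k * (M ^ d - 1) := by
          apply Nat.mul_le_mul_right
          apply ih
          exact hA'h
      _ = (M ^ d - 1) ^ (k + 1) := by rw [pow_succ]

set_option maxHeartbeats 2000000 in
/-- Covering lemma for porous compacts: there are `0 ≤ λ < d` and `C_λ > 0`
such that for any cube `R` (corner `b`, edge `L`) and `0 < ℓ < L/4`, any family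
of pairwise disjoint cubes of edge `ℓ` meeting `K ∩ R` has at most
`C_λ (L/ℓ)^λ` members. -/
theorem porous_covering_count {d : ℕ} (hd : 0 < d) (c : ℝ) (hc0 : 0 < c) (hc1 : c < 1)
    (K : Set (EuclideanSpace ℝ (Fin d))) (hKc : IsCompact K) (hK : IsPorous K c) :
    ∃ (lam C : ℝ), 0 ≤ lam ∧ lam < d ∧ 0 < C ∧
      ∀ (b : Fin d → ℝ) (L ℓ : ℝ), 0 < ℓ → ℓ < L / 4 →
        ∀ S : Finset (Fin d → ℝ),
          (S : Set (Fin d → ℝ)).Pairwise (fun a a' => Disjoint (cube a ℓ) (cube a' ℓ)) →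
          (∀ a ∈ S, (cube a ℓ ∩ (K ∩ cube b L)).Nonempty) →
          (S.card : ℝ) ≤ C * (L / ℓ) ^ lam := by
  classical
  set M : ℕ := max 2 ⌈2 * Real.sqrt d / c ^ ((d : ℝ)⁻¹)⌉₊ with hMdef
  have hM2 : 2 ≤ M := le_max_left _ _
  have hM0 : 0 < M := lt_of_lt_of_le (by norm_num) hM2
  have hM1 : 1 < M := lt_of_lt_of_le (by norm_num) hM2
  have hMγ : 2 * Real.sqrt d / c ^ ((d : ℝ)⁻¹) ≤ M := by
    calc 2 * Real.sqrt d / c ^ ((d : ℝ)⁻¹) ≤ (⌈2 * Real.sqrt d / c ^ ((d : ℝ)⁻¹)⌉₊ : ℝ) :=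
          Nat.le_ceil _
      _ ≤ M := by exact_mod_cast le_max_right _ _
  have hole := fun (a : Fin d → ℝ) (s : ℝ) (hs : 0 < s) =>
    hole_exists hd hc0 hK hM0 hMγ a s hs
  have hMR1 : (1:ℝ) < M := by exact_mod_cast hM1
  have hMR0 : (0:ℝ) < M := by linarith
  have hMd2 : (2:ℝ) ≤ (M:ℝ) ^ d := by
    calc (2:ℝ) = 2 ^ 1 := (pow_one 2).symm
      _ ≤ (2:ℝ) ^ d := pow_le_pow_right₀ (by norm_num) hd
      _ ≤ (M:ℝ) ^ d := by
          apply pow_le_pow_left₀ (by norm_num)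
          exact_mod_cast hM2
  set lam : ℝ := Real.logb M ((M:ℝ) ^ d - 1) with hlamdef
  have hlam0 : 0 ≤ lam := Real.logb_nonneg hMR1 (by linarith)
  have hlamd : lam < d := by
    have h1 : lam < Real.logb M ((M:ℝ) ^ d) :=
      Real.logb_lt_logb hMR1 (by linarith) (by linarith)
    have h2 : Real.logb M ((M:ℝ) ^ d) = d := by
      rw [Real.logb_pow, Real.logb_self_eq_one hMR1]
      ring
    linarith [h1, h2]
  refine ⟨lam, ((M:ℝ) + 2) ^ d, hlam0, hlamd, by positivity, ?_⟩
  intro b L ℓ hℓ hℓL S hdisj hmeet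
  have hL : 0 < L := by linarith
  have hLℓ : 4 < L / ℓ := by rw [lt_div_iff₀ hℓ]; linarith
  -- choose the scale k
  set n : ℕ := ⌊L / ℓ⌋₊ with hndef
  have hn0 : n ≠ 0 := by
    rw [hndef, ← Nat.pos_iff_ne_zero, Nat.floor_pos]
    linarith
  set k : ℕ := Nat.log M n with hkdef
  have hk1 : ((M:ℝ)) ^ k ≤ L / ℓ := by
    calc ((M:ℝ)) ^ k = ((M ^ k : ℕ) : ℝ) := by push_cast; ring
      _ ≤ (n : ℝ) := by exact_mod_cast Nat.pow_log_le_self M hn0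
      _ ≤ L / ℓ := Nat.floor_le (by linarith)
  have hk2 : L / ℓ < ((M:ℝ)) ^ (k + 1) := by
    calc L / ℓ < (n : ℝ) + 1 := Nat.lt_floor_add_one _
      _ ≤ ((M:ℝ)) ^ (k + 1) := by
          have h := Nat.lt_pow_succ_log_self hM1 n
          have h' : n + 1 ≤ M ^ (k + 1) := h
          calc ((n:ℝ)) + 1 = ((n + 1 : ℕ) : ℝ) := by push_cast; ring
            _ ≤ ((M ^ (k+1) : ℕ) : ℝ) := by exact_mod_cast h'
            _ = ((M:ℝ)) ^ (k+1) := by push_cast; ring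
  set s : ℝ := L / (M:ℝ) ^ k with hsdef
  have hMk0 : (0:ℝ) < (M:ℝ) ^ k := by positivity
  have hs0 : 0 < s := by positivity
  have hℓs : ℓ ≤ s := by
    rw [hsdef, le_div_iff₀ hMk0]
    rw [le_div_iff₀ hℓ] at hk1
    linarith [hk1]
  have hsM : s < (M:ℝ) * ℓ := by
    rw [hsdef, div_lt_iff₀ hMk0]
    rw [div_lt_iff₀ hℓ] at hk2
    calc L < (M:ℝ) ^ (k+1) * ℓ := hk2
      _ = (M:ℝ) * ℓ * (M:ℝ) ^ k := by rw [pow_succ]; ring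
  -- pick a point in each cube
  have hpex : ∀ a : Fin d → ℝ, a ∈ S → ∃ z : EuclideanSpace ℝ (Fin d),
      z ∈ cube a ℓ ∧ z ∈ K ∧ z ∈ cube b L := by
    intro a ha
    obtain ⟨z, hz⟩ := hmeet a ha
    exact ⟨z, hz.1, hz.2.1, hz.2.2⟩
  choose! p hp1 hp2 hp3 using hpex
  set u : (Fin d → ℝ) → (Fin d → ℕ) := fun a i => ⌊(p a i - b i) / s⌋₊ with hudef
  set t : (Fin d → ℝ) → (Fin d → ℕ) :=
    fun a i => ⌊(a i - (b i + s * u a i - ℓ)) / ℓ⌋₊ with htdef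
  -- basic floor facts for points of S
  have hufacts : ∀ a ∈ S, ∀ i, b i + s * u a i ≤ p a i ∧ p a i < b i + s * u a i + s := by
    intro a ha i
    have hpb : b i ≤ p a i ∧ p a i < b i + L := (hp3 a ha) i
    have hnn : 0 ≤ (p a i - b i) / s := div_nonneg (by linarith [hpb.1]) hs0.le
    constructor
    · have := Nat.floor_le hnn
      rw [le_div_iff₀ hs0] at this
      simp only [hudef]
      linarith [this]
    · have := Nat.lt_floor_add_one ((p a i - b i) / s)
      rw [div_lt_iff₀ hs0] at this
      simp only [hudef]
      linarith [this]
  have hulfacts : ∀ a ∈ S, ∀ i, u a i < M ^ k := by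
    intro a ha i
    have hpb : b i ≤ p a i ∧ p a i < b i + L := (hp3 a ha) i
    have hnn : 0 ≤ (p a i - b i) / s := div_nonneg (by linarith [hpb.1]) hs0.le
    have hsMk : s * ((M:ℝ) ^ k) = L := by
      rw [hsdef]; field_simp
    have : (p a i - b i) / s < ((M ^ k : ℕ) : ℝ) := by
      rw [div_lt_iff₀ hs0]
      push_cast
      nlinarith [hpb.2, hsMk]
    simp only [hudef]
    exact Nat.floor_lt hnn |>.mpr this
  have htrange : ∀ a ∈ S, ∀ i, 0 < a i - (b i + s * u a i - ℓ) ∧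
      a i - (b i + s * u a i - ℓ) < s + ℓ := by
    intro a ha i
    have hu := hufacts a ha i
    have hpc : a i ≤ p a i ∧ p a i < a i + ℓ := (hp1 a ha) i
    constructor
    · linarith [hu.1, hpc.2]
    · linarith [hu.2, hpc.1]
  -- the injection
  set A' : Finset (Fin d → ℕ) := S.image u with hA'def
  have hcount := grid_count hM0 K hole b L hL k A' ?_
  swap
  · intro v hv
    rw [hA'def, Finset.mem_image] at hv
    obtain ⟨a, ha, rfl⟩ := hv
    refine ⟨hulfacts a ha, ⟨p a, ?_, hp2 a ha⟩⟩
    intro i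
    have hu := hufacts a ha i
    have hsd : L / (M:ℝ) ^ k = s := rfl
    rw [hsd]
    exact ⟨hu.1, hu.2⟩
  -- card bound via injection into A' × residues
  have hinj : (S.card : ℕ) ≤ (A' ×ˢ Fintype.piFinset fun _ : Fin d => Finset.range (M + 2)).card := by
    apply Finset.card_le_card_of_injOn (fun a => (u a, t a))
    · intro a ha
      rw [Finset.mem_coe, Finset.mem_product]
      constructor
      · exact Finset.mem_image_of_mem u ha
      · rw [Fintype.mem_piFinset]
        intro i
        rw [Finset.mem_range]
        have htr := htrange a ha i
        have hnn : 0 ≤ (a i - (b i + s * u a i - ℓ)) / ℓ := div_nonneg (le_of_lt htr.1) hℓ.le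
        simp only [htdef]
        rw [Nat.floor_lt hnn, div_lt_iff₀ hℓ]
        push_cast
        nlinarith [htr.2, hsM, hℓ]
    · intro a ha a' ha' heq
      by_contra hne
      simp only [Prod.mk.injEq] at heq
      obtain ⟨hueq, hteq⟩ := heq
      have habs : ∀ i, |a i - a' i| < ℓ := by
        intro i
        have h1 := htrange a (by exact_mod_cast ha) i
        have h2 := htrange a' (by exact_mod_cast ha') i
        have hti : t a i = t a' i := by rw [hteq]
        have hui : u a i = u a' i := by rw [hueq]
        have hfl1 : ℓ * (t a i : ℝ) ≤ a i - (b i + s * u a i - ℓ) := by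
          have hnn : 0 ≤ (a i - (b i + s * u a i - ℓ)) / ℓ := div_nonneg h1.1.le hℓ.le
          have := Nat.floor_le hnn
          rw [le_div_iff₀ hℓ] at this
          simp only [htdef]
          linarith [this]
        have hfu1 : a i - (b i + s * u a i - ℓ) < ℓ * ((t a i : ℝ) + 1) := by
          have := Nat.lt_floor_add_one ((a i - (b i + s * u a i - ℓ)) / ℓ)
          rw [div_lt_iff₀ hℓ] at this
          simp only [htdef]
          linarith [this]
        have hfl2 : ℓ * (t a' i : ℝ) ≤ a' i - (b i + s * u a' i - ℓ) := by
          have hnn : 0 ≤ (a' i - (b i + s * u a' i - ℓ)) / ℓ := div_nonneg h2.1.le hℓ.le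
          have := Nat.floor_le hnn
          rw [le_div_iff₀ hℓ] at this
          simp only [htdef]
          linarith [this]
        have hfu2 : a' i - (b i + s * u a' i - ℓ) < ℓ * ((t a' i : ℝ) + 1) := by
          have := Nat.lt_floor_add_one ((a' i - (b i + s * u a' i - ℓ)) / ℓ)
          rw [div_lt_iff₀ hℓ] at this
          simp only [htdef]
          linarith [this]
        rw [abs_lt]
        rw [hti] at hfl1 hfu1
        rw [hui] at hfl1 hfu1
        constructor <;> nlinarith [hfl1, hfu1, hfl2, hfu2]
      -- the two cubes then intersect
      have hdisj' := hdisj (by exact_mod_cast ha) (by exact_mod_cast ha') hne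
      set z : EuclideanSpace ℝ (Fin d) := WithLp.toLp 2 (fun i => max (a i) (a' i)) with hzdef
      have hz1 : z ∈ cube a ℓ := by
        intro i
        have := habs i
        rw [abs_lt] at this
        constructor
        · exact le_max_left _ _
        · have : max (a i) (a' i) < a i + ℓ := max_lt (by linarith) (by linarith)
          exact this
      have hz2 : z ∈ cube a' ℓ := by
        intro i
        have := habs i
        rw [abs_lt] at this
        constructor
        · exact le_max_right _ _
        · have : max (a i) (a' i) < a' i + ℓ := max_lt (by linarith) (by linarith)
          exact this
      exact Set.disjoint_left.mp hdisj' hz1 hz2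
  -- conclude
  have hcardprod : (A' ×ˢ Fintype.piFinset fun _ : Fin d => Finset.range (M + 2)).card
      = A'.card * (M + 2) ^ d := by
    rw [Finset.card_product, Fintype.card_piFinset]
    simp [Finset.card_range, Finset.prod_const, Finset.card_univ]
  have hfinal : (S.card : ℝ) ≤ ((M ^ d - 1 : ℕ) : ℝ) ^ k * ((M:ℝ) + 2) ^ d := by
    have h1 : (S.card : ℕ) ≤ (M ^ d - 1) ^ k * (M + 2) ^ d := by
      calc S.card ≤ _ := hinj
        _ = A'.card * (M + 2) ^ d := hcardprod
        _ ≤ (M ^ d - 1) ^ k * (M + 2) ^ d := Nat.mul_le_mul_right _ hcount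
    calc (S.card : ℝ) ≤ (((M ^ d - 1) ^ k * (M + 2) ^ d : ℕ) : ℝ) := by exact_mod_cast h1
      _ = ((M ^ d - 1 : ℕ) : ℝ) ^ k * ((M:ℝ) + 2) ^ d := by push_cast; ring
  have hcast : ((M ^ d - 1 : ℕ) : ℝ) = (M:ℝ) ^ d - 1 := by
    have : 1 ≤ M ^ d := Nat.one_le_pow _ _ hM0
    push_cast [Nat.cast_sub this]
    ring
  have hpow : ((M:ℝ) ^ d - 1) ^ k ≤ (L / ℓ) ^ lam := by
    have hx : (0:ℝ) < (M:ℝ) ^ d - 1 := by linarith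
    have hrw : (M:ℝ) ^ d - 1 = (M:ℝ) ^ lam := (Real.rpow_logb hMR0 (by linarith) hx).symm
    rw [hrw, ← Real.rpow_natCast ((M:ℝ) ^ lam) k, ← Real.rpow_mul hMR0.le]
    have hMk : ((M:ℝ) ^ k) ^ lam = (M:ℝ) ^ (lam * (k:ℝ)) := by
      rw [← Real.rpow_natCast (M:ℝ) k, ← Real.rpow_mul hMR0.le, mul_comm]
    rw [← hMk]
    exact Real.rpow_le_rpow (by positivity) hk1 hlam0
  calc (S.card : ℝ) ≤ ((M ^ d - 1 : ℕ) : ℝ) ^ k * ((M:ℝ) + 2) ^ d := hfinal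
    _ = ((M:ℝ) + 2) ^ d * ((M:ℝ) ^ d - 1) ^ k := by rw [hcast]; ring
    _ ≤ ((M:ℝ) + 2) ^ d * (L / ℓ) ^ lam := by
        apply mul_le_mul_of_nonneg_left hpow (by positivity)
end

section
/- Let K ⊂ ℝ^d. If for every ball B(x,R) centered at x ∈ K and every 0 < r < R the minimal number N(K ∩ B(x,R), r) of balls of radius r with centers in K needed to cover K ∩ B(x,R) satisfies N(K ∩ B(x,R), r) ≤ C (R/r)^λ for some λ < d and constant C, then K is porous: there exists c ∈ (0,1) such that every ball B contains a subball disjoint from K of Lebesgue measure at least c|B|. -/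
open Set Metric MeasureTheory

/-- If `K ⊆ ℝ^d` satisfies an Assouad-type covering estimate with exponent
`λ < d` (every `K ∩ B(x,R)` is covered by at most `C (R/r)^λ` balls of radius
`r` with centers in `K ∩ B(x,R)`), then `K` is porous. -/
theorem assouad_lt_dim_implies_porous {d : ℕ} (hd : 0 < d)
    (K : Set (EuclideanSpace ℝ (Fin d)))
    (C lam : ℝ) (hC : 0 < C) (hlam0 : 0 ≤ lam) (hlam : lam < d)
    (hcov : ∀ x ∈ K, ∀ R r : ℝ, 0 < r → r < R →
      ∃ T : Finset (EuclideanSpace ℝ (Fin d)),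
        (T : Set (EuclideanSpace ℝ (Fin d))) ⊆ K ∩ ball x R ∧
        K ∩ ball x R ⊆ ⋃ y ∈ T, ball y r ∧
        (T.card : ℝ) ≤ C * (R / r) ^ lam) :
    ∃ c : ℝ, 0 < c ∧ c < 1 ∧ IsPorous K c := by
  haveI : Nontrivial (EuclideanSpace ℝ (Fin d)) :=
    Module.nontrivial_of_finrank_pos (R := ℝ)
      (by rw [finrank_euclideanSpace_fin]; exact hd)
  set V := volume (ball (0:EuclideanSpace ℝ (Fin d)) 1) with hVdef
  have hVpos : 0 < V := measure_ball_pos volume 0 one_pos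
  have hVlt : V < ⊤ := measure_ball_lt_top
  have hvol : ∀ (x : EuclideanSpace ℝ (Fin d)) (ρ : ℝ), 0 ≤ ρ →
      volume (ball x ρ) = ENNReal.ofReal (ρ ^ d) * V := by
    intro x ρ hρ
    rw [hVdef, Measure.addHaar_ball volume x hρ, finrank_euclideanSpace_fin]
  clear_value V
  set s : ℝ := (d : ℝ) - lam with hsdef
  have hs0 : 0 < s := sub_pos.mpr hlam
  set M : ℝ := C * 2 ^ (2 * d + 1) with hMdef
  have hMpos : 0 < M := by positivity
  set ε : ℝ := min (1 / 2) ((1 / M) ^ (1 / s)) with hεdef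
  have hε0 : 0 < ε := lt_min (by norm_num) (Real.rpow_pos_of_pos (by positivity) _)
  have hεhalf : ε ≤ 1 / 2 := min_le_left _ _
  have hε1 : ε ≤ 1 := hεhalf.trans (by norm_num)
  have hεs : ε ^ s ≤ 1 / M := by
    calc ε ^ s ≤ ((1 / M) ^ (1 / s)) ^ s :=
          Real.rpow_le_rpow hε0.le (min_le_right _ _) hs0.le
      _ = 1 / M := by
          rw [← Real.rpow_mul (by positivity), one_div_mul_cancel hs0.ne', Real.rpow_one]
  clear_value s M ε
  refine ⟨(ε / 2) ^ d, by positivity, ?_, ?_⟩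
  · exact pow_lt_one₀ (by positivity) (by linarith) hd.ne'
  intro x r hr
  by_cases hK : ball x (r / 2) ∩ K = ∅
  · refine ⟨x, r / 2, by positivity, ball_subset_ball (by linarith), hK, ?_⟩
    rw [hvol x r hr.le, hvol x (r / 2) (by positivity), ← mul_assoc,
      ← ENNReal.ofReal_mul (by positivity)]
    refine mul_le_mul_left (ENNReal.ofReal_le_ofReal ?_) V
    have h1 : (ε / 2) ^ d * r ^ d = (ε * r / 2) ^ d := by rw [← mul_pow]; ring_nf
    rw [h1]
    exact pow_le_pow_left₀ (by positivity) (by nlinarith) d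
  · obtain ⟨z, hz⟩ := Set.nonempty_iff_ne_empty.mpr hK
    set R : ℝ := r / 2 with hRdef
    have hR : 0 < R := by positivity
    set ρ : ℝ := ε * R with hρdef
    have hρ0 : 0 < ρ := by positivity
    clear_value R ρ
    have hρR2 : ρ ≤ R / 2 := by nlinarith
    obtain ⟨T, hT1, hT2, hT3⟩ := hcov z hz.2 R ρ hρ0 (by nlinarith)
    have claim : ∃ w, w ∈ ball z (R / 2) ∧ ball w ρ ∩ K = ∅ := by
      by_contra hcon
      push_neg at hcon
      have hsub : ball z (R / 2) ⊆ ⋃ y ∈ T, ball y (2 * ρ) := by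
        intro w hw
        obtain ⟨k, hk⟩ := hcon w hw
        have hkw : dist k w < ρ := mem_ball.mp hk.1
        have hwz : dist w z < R / 2 := mem_ball.mp hw
        have hkz : k ∈ ball z R := by
          rw [mem_ball]
          calc dist k z ≤ dist k w + dist w z := dist_triangle _ _ _
            _ < ρ + R / 2 := by linarith
            _ ≤ R := by linarith
        obtain ⟨y, hyT, hky⟩ := mem_iUnion₂.mp (hT2 ⟨hk.2, hkz⟩)
        refine mem_iUnion₂.mpr ⟨y, hyT, ?_⟩
        rw [mem_ball]
        calc dist w y ≤ dist w k + dist k y := dist_triangle _ _ _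
          _ < ρ + ρ := by
              have := mem_ball.mp hky
              rw [dist_comm] at hkw; linarith
          _ = 2 * ρ := by ring
      have hm : ENNReal.ofReal ((R / 2) ^ d) * V ≤
          (T.card : ENNReal) * (ENNReal.ofReal ((2 * ρ) ^ d) * V) := by
        calc ENNReal.ofReal ((R / 2) ^ d) * V = volume (ball z (R / 2)) :=
              (hvol z (R / 2) (by positivity)).symm
          _ ≤ volume (⋃ y ∈ T, ball y (2 * ρ)) := measure_mono hsub
          _ ≤ ∑ y ∈ T, volume (ball y (2 * ρ)) := measure_biUnion_finset_le T _
          _ = (T.card : ENNReal) * (ENNReal.ofReal ((2 * ρ) ^ d) * V) := by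
              rw [Finset.sum_congr rfl (fun y _ => hvol y (2 * ρ) (by positivity)),
                Finset.sum_const, nsmul_eq_mul]
      rw [← mul_assoc] at hm
      have hm2 : ENNReal.ofReal ((R / 2) ^ d) ≤
          (T.card : ENNReal) * ENNReal.ofReal ((2 * ρ) ^ d) :=
        (ENNReal.mul_le_mul_iff_left hVpos.ne' hVlt.ne).mp hm
      have hreal : (R / 2) ^ d ≤ (T.card : ℝ) * (2 * ρ) ^ d := by
        rw [← ENNReal.ofReal_natCast, ← ENNReal.ofReal_mul (by positivity)] at hm2
        exact (ENNReal.ofReal_le_ofReal_iff (by positivity)).mp hm2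
      have h1 : (R / 2) ^ d ≤ C * (R / ρ) ^ lam * (2 * ρ) ^ d :=
        hreal.trans (mul_le_mul_of_nonneg_right hT3 (by positivity))
      have hkey : C * (R / ρ) ^ lam * (2 * ρ) ^ d = C * 2 ^ d * ε ^ s * R ^ d := by
        have e1 : R / ρ = ε⁻¹ := by
          rw [hρdef]; field_simp
        have e2 : (2 * ρ) ^ d = 2 ^ d * (ε ^ d * R ^ d) := by
          rw [hρdef, mul_pow, mul_pow]
        have e3 : (ε : ℝ) ^ d = ε ^ (d : ℝ) := (Real.rpow_natCast ε d).symm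
        rw [e1, e2, Real.inv_rpow hε0.le, e3, hsdef, Real.rpow_sub hε0]
        field_simp
      rw [hkey] at h1
      have hRd : 0 < R ^ d := pow_pos hR d
      have hhalf : 0 < (1 / 2 : ℝ) ^ d := by positivity
      have h3 : C * 2 ^ d * ε ^ s ≤ C * 2 ^ d * (1 / M) :=
        mul_le_mul_of_nonneg_left hεs (by positivity)
      have h4 : C * 2 ^ d * (1 / M) = (1 / 2) * (1 / 2 : ℝ) ^ d := by
        rw [hMdef]
        have h2d : (2 : ℝ) ^ (2 * d + 1) = 2 ^ d * 2 ^ d * 2 := by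
          rw [two_mul, pow_add, pow_add]; ring
        rw [h2d]
        field_simp
        rw [← mul_pow]; norm_num
      have h5 : (R / 2) ^ d = (1 / 2 : ℝ) ^ d * R ^ d := by
        rw [div_pow, one_div, inv_pow]; ring
      rw [h5] at h1
      nlinarith [mul_le_mul_of_nonneg_right h3 hRd.le]
    obtain ⟨w, hw, hwK⟩ := claim
    have hwz : dist w z < R / 2 := mem_ball.mp hw
    have hzx : dist z x < R := mem_ball.mp hz.1
    refine ⟨w, ρ, hρ0, ?_, hwK, ?_⟩
    · intro p hp
      have hpw : dist p w < ρ := mem_ball.mp hp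
      rw [mem_ball]
      calc dist p x ≤ dist p w + dist w z + dist z x := dist_triangle4 p w z x
        _ < ρ + R / 2 + R := by linarith
        _ ≤ r := by rw [hRdef] at hρR2 ⊢; linarith
    · rw [hvol x r hr.le, hvol w ρ hρ0.le, ← mul_assoc,
        ← ENNReal.ofReal_mul (by positivity)]
      refine mul_le_mul_left (ENNReal.ofReal_le_ofReal (le_of_eq ?_)) V
      rw [hρdef, hRdef, ← mul_pow]
      ring_nf
end

section
/- Suppose K ⊂ ℝ^d is compact, ω a modulus of continuity, and f continuous on K. Suppose for every sufficiently small δ > 0 there is a C^1 function G_δ on the δ-neighbourhood K_δ of K with sup_K |f − G_δ| ≤ C_1 ω(δ) and sup_{K_δ} |∇G_δ| ≤ C_2 ω(δ)/δ, with C_1, C_2 independent of δ. Then f ∈ Lip_ω(K), i.e., there is a constant C such that |f(x) − f(y)| ≤ C ω(|x−y|) for all x, y ∈ K. -/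
open Set Metric MeasureTheory

/-- Sufficiency direction of the Jackson–Bernstein theorem: if a continuous
function `f` on a compact `K` admits, for every small `δ > 0`, a `C¹` function
`G_δ` on the `δ`-neighbourhood `K_δ` with `sup_K |f − G_δ| ≤ C₁ ω(δ)` and
`sup_{K_δ} |∇G_δ| ≤ C₂ ω(δ)/δ`, then `f ∈ Lip_ω(K)`. -/
theorem sufficiency_jackson_bernstein {d : ℕ} (hd : 0 < d)
    (K : Set (EuclideanSpace ℝ (Fin d))) (hK : IsCompact K) (hKne : K.Nonempty)
    (ω : ℝ → ℝ) (hcont : ContinuousOn ω (Ici 0)) (hmono : MonotoneOn ω (Ici 0))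
    (hconc : ConcaveOn ℝ (Ici 0) ω) (hω0 : ω 0 = 0)
    (hωpos : ∀ t, 0 < t → 0 < ω t)
    (f : EuclideanSpace ℝ (Fin d) → ℝ) (hf : ContinuousOn f K)
    (C₁ C₂ δ₀ : ℝ) (hδ₀ : 0 < δ₀)
    (happrox : ∀ δ : ℝ, 0 < δ → δ < δ₀ →
      ∃ G : EuclideanSpace ℝ (Fin d) → ℝ,
        ContDiffOn ℝ 1 G {x | infDist x K < δ} ∧
        (∀ x ∈ K, |f x - G x| ≤ C₁ * ω δ) ∧
        (∀ x ∈ {x | infDist x K < δ}, ‖fderiv ℝ G x‖ ≤ C₂ * ω δ / δ)) :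
    ∃ C : ℝ, ∀ x ∈ K, ∀ y ∈ K, |f x - f y| ≤ C * ω (dist x y) := by
  -- ω is nonnegative on [0, ∞)
  have hωnn : ∀ t : ℝ, 0 ≤ t → 0 ≤ ω t := fun t ht => by
    rcases ht.eq_or_lt with h | h
    · simp [← h, hω0]
    · exact (hωpos t h).le
  -- subadditivity: ω (2t) ≤ 2 * ω t for t ≥ 0
  have hsub : ∀ t : ℝ, 0 ≤ t → ω (2 * t) ≤ 2 * ω t := by
    intro t ht
    have h := hconc.2 (mem_Ici.2 (le_refl (0:ℝ)))
      (show 2 * t ∈ Ici (0:ℝ) from by simp; linarith)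
      (by norm_num : (0:ℝ) ≤ 1/2) (by norm_num : (0:ℝ) ≤ 1/2) (by norm_num)
    simp only [smul_eq_mul, hω0] at h
    have : (1:ℝ)/2 * 0 + 1/2 * (2*t) = t := by ring
    rw [this] at h
    linarith
  -- f bounded on K
  obtain ⟨M, hM⟩ := hK.exists_bound_of_continuousOn hf
  obtain ⟨x₀, hx₀⟩ := hKne
  have hMnn : 0 ≤ M := le_trans (norm_nonneg _) (hM x₀ hx₀)
  have hωδ₀ : 0 < ω (δ₀ / 2) := hωpos _ (by linarith)
  set C : ℝ := (4 * |C₁| + 2 * |C₂|) + 2 * M / ω (δ₀ / 2) with hC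
  refine ⟨C, fun x hx y hy => ?_⟩
  set t := dist x y with htdef
  have ht0 : 0 ≤ t := dist_nonneg
  rcases ht0.eq_or_lt with h0 | htpos
  · have hxy : x = y := dist_eq_zero.1 h0.symm
    subst hxy
    rw [← h0, hω0, mul_zero, sub_self, abs_zero]
  · rcases lt_or_ge t (δ₀ / 2) with hsmall | hbig
    · -- small case: use G with δ = 2t
      obtain ⟨G, hG1, hG2, hG3⟩ := happrox (2 * t) (by linarith) (by linarith)
      set U : Set (EuclideanSpace ℝ (Fin d)) := {z | infDist z K < 2 * t} with hU
      have hUopen : IsOpen U := isOpen_lt (continuous_infDist_pt K) continuous_const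
      -- segment is in U
      have hseg : segment ℝ x y ⊆ U := by
        intro z hz
        have : dist x z ≤ t := by
          have := dist_add_dist_of_mem_segment hz
          have : dist x z + dist z y = t := this
          nlinarith [dist_nonneg (x := z) (y := y)]
        calc infDist z K ≤ dist z x := infDist_le_dist_of_mem hx
          _ ≤ t := by rwa [dist_comm]
          _ < 2 * t := by linarith
      have hdiff : ∀ z ∈ segment ℝ x y, DifferentiableAt ℝ G z := by
        intro z hz
        have hzU := hseg hz
        exact (hG1.differentiableOn one_ne_zero).differentiableAt (hUopen.mem_nhds hzU)
      have hbound : ∀ z ∈ segment ℝ x y, ‖fderiv ℝ G z‖ ≤ C₂ * ω (2 * t) / (2 * t) :=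
        fun z hz => hG3 z (hseg hz)
      have hmv : ‖G y - G x‖ ≤ C₂ * ω (2*t) / (2*t) * ‖y - x‖ :=
        (convex_segment x y).norm_image_sub_le_of_norm_fderiv_le hdiff hbound
          (left_mem_segment ℝ x y) (right_mem_segment ℝ x y)
      have hnorm : ‖y - x‖ = t := by rw [htdef, dist_comm, dist_eq_norm]
      rw [hnorm] at hmv
      have hGxy : |G x - G y| ≤ C₂ * ω (2*t) / 2 := by
        rw [abs_sub_comm]
        calc |G y - G x| ≤ C₂ * ω (2*t) / (2*t) * t := hmv
          _ = C₂ * ω (2*t) / 2 := by field_simp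
      have h1 := hG2 x hx
      have h2 := hG2 y hy
      -- C₂ * ω(2t)/(2t) ≥ 0 since it bounds a norm at point x ∈ U
      have hC2nn : 0 ≤ C₂ * ω (2*t) / (2*t) := le_trans (norm_nonneg _)
        (hG3 x (hseg (left_mem_segment ℝ x y)))
      have hω2t : ω (2*t) ≤ 2 * ω t := hsub t ht0
      have hω2tnn : 0 ≤ ω (2*t) := hωnn _ (by linarith)
      have hωtnn : 0 ≤ ω t := hωnn _ ht0
      have key : |f x - f y| ≤ 2 * (C₁ * ω (2*t)) + C₂ * ω (2*t) / 2 := by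
        have : f x - f y = (f x - G x) + (G x - G y) + (G y - f y) := by ring
        rw [this]
        calc |(f x - G x) + (G x - G y) + (G y - f y)|
            ≤ |f x - G x| + |G x - G y| + |G y - f y| := by
              exact (abs_add_le _ _).trans (by gcongr; exact abs_add_le _ _)
          _ ≤ C₁ * ω (2*t) + C₂ * ω (2*t) / 2 + C₁ * ω (2*t) :=
              add_le_add (add_le_add h1 hGxy) (by rw [abs_sub_comm]; exact h2)
          _ = 2 * (C₁ * ω (2*t)) + C₂ * ω (2*t) / 2 := by ring
      have hC1 : C₁ * ω (2*t) ≤ |C₁| * (2 * ω t) :=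
        le_trans (mul_le_mul_of_nonneg_right (le_abs_self _) hω2tnn)
          (mul_le_mul_of_nonneg_left hω2t (abs_nonneg _))
      have hC2' : C₂ * ω (2*t) / 2 ≤ |C₂| * ω t := by
        have h1' : C₂ * ω (2*t) ≤ |C₂| * ω (2*t) :=
          mul_le_mul_of_nonneg_right (le_abs_self _) hω2tnn
        have h2' : |C₂| * ω (2*t) ≤ |C₂| * (2 * ω t) :=
          mul_le_mul_of_nonneg_left hω2t (abs_nonneg _)
        linarith
      have hrest : 0 ≤ 2 * M / ω (δ₀/2) * ω t := by positivity
      calc |f x - f y| ≤ 2 * (C₁ * ω (2*t)) + C₂ * ω (2*t) / 2 := key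
        _ ≤ 2 * (|C₁| * (2 * ω t)) + |C₂| * ω t := by linarith
        _ ≤ (4 * |C₁| + 2 * |C₂|) * ω t + 2 * M / ω (δ₀/2) * ω t := by
              have hc2wt : 0 ≤ |C₂| * ω t := mul_nonneg (abs_nonneg _) hωtnn
              nlinarith
        _ = C * ω t := by rw [hC]; ring
    · -- big case
      have hωt : ω (δ₀/2) ≤ ω t := hmono (mem_Ici.2 (by linarith)) (mem_Ici.2 ht0) hbig
      have hfb : |f x - f y| ≤ 2 * M := by
        have := hM x hx; have := hM y hy
        simp only [Real.norm_eq_abs] at *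
        calc |f x - f y| ≤ |f x| + |f y| := abs_sub _ _
          _ ≤ 2 * M := by linarith
      have hωtpos : 0 < ω t := lt_of_lt_of_le hωδ₀ hωt
      have h2M : 2 * M ≤ 2 * M / ω (δ₀/2) * ω t := by
        rw [div_mul_eq_mul_div, le_div_iff₀ hωδ₀]
        nlinarith
      have hrest : 0 ≤ (4 * |C₁| + 2 * |C₂|) * ω t := by positivity
      calc |f x - f y| ≤ 2 * M := hfb
        _ ≤ 2 * M / ω (δ₀/2) * ω t := h2M
        _ ≤ C * ω t := by rw [hC]; nlinarith
end

section
/- Let d ≥ 3 and E(t) = |t|^{2−d} for t ∈ ℝ^d \ {0}. For every multi-index α with |α| ≥ 1, |∂^α E(t)| ≤ C_d · α! · |α|^{(d−1)/2} · (2d/|t|)^{|α|+d−2}, with C_d depending only on d. -/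
open Set

/-- Partial derivative of `g : ℝ^d → ℝ` in the `i`-th coordinate direction. -/
noncomputable def pderiv' {d : ℕ} (i : Fin d)
    (g : EuclideanSpace ℝ (Fin d) → ℝ) : EuclideanSpace ℝ (Fin d) → ℝ :=
  fun x => fderiv ℝ g x (EuclideanSpace.single i 1)

/-- The iterated partial derivative `∂^α = ∂_1^{α_1} ⋯ ∂_d^{α_d}`. -/
noncomputable def mpderiv {d : ℕ} (α : Fin d → ℕ)
    (g : EuclideanSpace ℝ (Fin d) → ℝ) : EuclideanSpace ℝ (Fin d) → ℝ :=
  (List.finRange d).foldr (fun i h => (pderiv' i)^[α i] h) g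

namespace FundSolAux

open Metric Complex

variable {d : ℕ}

/-- Complex partial derivative in the `i`-th coordinate. -/
noncomputable def cpd (i : Fin d) (G : (Fin d → ℂ) → ℂ) : (Fin d → ℂ) → ℂ :=
  fun z => fderiv ℂ G z (Pi.single i 1)

lemma cpd_analyticOnNhd {Ω : Set (Fin d → ℂ)} {Φ : (Fin d → ℂ) → ℂ}
    (hΦ : AnalyticOnNhd ℂ Φ Ω) (i : Fin d) : AnalyticOnNhd ℂ (cpd i Φ) Ω := by
  intro z hz
  have h1 : AnalyticAt ℂ (fderiv ℂ Φ) z := (hΦ z hz).fderiv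
  exact ((ContinuousLinearMap.apply ℂ ℂ (Pi.single i (1:ℂ))).analyticAt
    (fderiv ℂ Φ z)).comp h1

lemma cpd_iterate_analyticOnNhd {Ω : Set (Fin d → ℂ)} {Φ : (Fin d → ℂ) → ℂ}
    (hΦ : AnalyticOnNhd ℂ Φ Ω) (i : Fin d) (k : ℕ) :
    AnalyticOnNhd ℂ ((cpd i)^[k] Φ) Ω := by
  induction k with
  | zero => exact hΦ
  | succ k ih => rw [Function.iterate_succ_apply']; exact cpd_analyticOnNhd ih i

lemma continuous_update (z : Fin d → ℂ) (i : Fin d) :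
    Continuous fun w' : ℂ => Function.update z i w' := by
  apply continuous_pi; intro j
  by_cases hj : j = i
  · subst hj; simp only [Function.update_self]; exact continuous_id
  · simp only [Function.update_of_ne hj]; exact continuous_const

lemma hasDerivAt_update (z : Fin d → ℂ) (i : Fin d) (w : ℂ) :
    HasDerivAt (fun w' : ℂ => Function.update z i w') (Pi.single i 1) w := by
  have h1 : HasDerivAt (fun w' : ℂ => w' • (Pi.single i 1 : Fin d → ℂ)) (Pi.single i 1) w := by
    simpa using (hasDerivAt_id w).smul_const (Pi.single i 1 : Fin d → ℂ)
  have h2 := h1.const_add (Function.update z i 0)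
  refine h2.congr_of_eventuallyEq (Filter.Eventually.of_forall fun w' => ?_)
  funext j
  by_cases hj : j = i
  · subst hj; simp
  · simp [Function.update_apply, hj, Pi.single_apply]

/-- One-variable Cauchy estimate for iterated derivatives. -/
lemma cauchy_bound {φ : ℂ → ℂ} {c : ℂ} {R M : ℝ} (hR : 0 < R)
    (hφ : DifferentiableOn ℂ φ (closedBall c R))
    (hM : ∀ z ∈ closedBall c R, ‖φ z‖ ≤ M) (k : ℕ) :
    ‖iteratedDeriv k φ c‖ ≤ k.factorial * M / R ^ k := by
  have hM0 : 0 ≤ M := le_trans (norm_nonneg _) (hM c (mem_closedBall_self hR.le))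
  lift R to NNReal using hR.le with R' hR'
  have hR0 : 0 < R' := by exact_mod_cast hR
  have hser : HasFPowerSeriesOnBall φ (cauchyPowerSeries φ c R') c R' :=
    hφ.hasFPowerSeriesOnBall hR0
  have hid : iteratedDeriv k φ c = iteratedFDeriv ℂ k φ c (fun _ => 1) :=
    iteratedDeriv_eq_iteratedFDeriv
  have hfs := hser.factorial_smul (1 : ℂ) k
  rw [hid, ← hfs]
  have hcoef : ‖cauchyPowerSeries φ c R' k‖ ≤ M * ((R' : ℝ))⁻¹ ^ k := by
    refine le_trans (norm_cauchyPowerSeries_le φ c R' k) ?_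
    have habs : |(R' : ℝ)| = (R' : ℝ) := abs_of_nonneg R'.coe_nonneg
    rw [habs]
    refine mul_le_mul_of_nonneg_right ?_ (by positivity)
    have hcont : Continuous fun θ : ℝ => ‖φ (circleMap c R' θ)‖ := by
      apply Continuous.norm
      have h1 : ContinuousOn φ (closedBall c R') := hφ.continuousOn
      have h2 : Continuous fun θ : ℝ => circleMap c R' θ := continuous_circleMap c R'
      rw [← continuousOn_univ]
      exact h1.comp h2.continuousOn fun θ _ => circleMap_mem_closedBall c R'.coe_nonneg θ
    have hle : ∫ θ : ℝ in (0)..2 * Real.pi, ‖φ (circleMap c R' θ)‖ ≤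
        ∫ _ : ℝ in (0)..2 * Real.pi, M := by
      apply intervalIntegral.integral_mono_on Real.two_pi_pos.le
        (hcont.intervalIntegrable _ _) intervalIntegrable_const
      intro θ _
      exact hM _ (circleMap_mem_closedBall c R'.coe_nonneg θ)
    rw [intervalIntegral.integral_const, smul_eq_mul, sub_zero] at hle
    calc (2 * Real.pi)⁻¹ * ∫ θ : ℝ in (0)..2 * Real.pi, ‖φ (circleMap c R' θ)‖
        ≤ (2 * Real.pi)⁻¹ * (2 * Real.pi * M) :=
          mul_le_mul_of_nonneg_left hle (by positivity)
      _ = M := by field_simp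
  have hk : ‖(k.factorial : ℕ) • (cauchyPowerSeries φ c R' k) (fun _ => (1:ℂ))‖
      = (k.factorial : ℝ) * ‖(cauchyPowerSeries φ c R' k) (fun _ => (1:ℂ))‖ := by
    rw [nsmul_eq_mul, norm_mul, Complex.norm_natCast]
  rw [hk]
  have hop : ‖(cauchyPowerSeries φ c R' k) (fun _ => (1:ℂ))‖
      ≤ ‖cauchyPowerSeries φ c R' k‖ := by
    have := (cauchyPowerSeries φ c R' k).le_opNorm (fun _ => (1:ℂ))
    simpa using this
  calc (k.factorial : ℝ) * ‖(cauchyPowerSeries φ c R' k) (fun _ => (1:ℂ))‖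
      ≤ (k.factorial : ℝ) * (M * ((R' : ℝ))⁻¹ ^ k) := by
        gcongr
        exact hop.trans hcoef
    _ = k.factorial * M / (R' : ℝ) ^ k := by
        rw [inv_pow]
        ring

/-- Iterated coordinate partials along a coordinate line agree with 1-D iterated
derivatives of the slice. -/
lemma cpd_iterate_slice {Ω : Set (Fin d → ℂ)} (hΩ : IsOpen Ω) {Φ : (Fin d → ℂ) → ℂ}
    (hΦ : AnalyticOnNhd ℂ Φ Ω) (z : Fin d → ℂ) (i : Fin d) (k : ℕ) :
    ∀ w : ℂ, Function.update z i w ∈ Ω →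
      iteratedDeriv k (fun w' => Φ (Function.update z i w')) w
        = (cpd i)^[k] Φ (Function.update z i w) := by
  induction k with
  | zero => intro w _; simp
  | succ k ih =>
    intro w hw
    rw [iteratedDeriv_succ]
    have hopen : IsOpen {w' : ℂ | Function.update z i w' ∈ Ω} :=
      hΩ.preimage (continuous_update z i)
    have hev : deriv (iteratedDeriv k fun w' => Φ (Function.update z i w')) w
        = deriv (fun w' => (cpd i)^[k] Φ (Function.update z i w')) w := by
      apply Filter.EventuallyEq.deriv_eq
      filter_upwards [hopen.mem_nhds hw] with w' hw' using ih w' hw'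
    rw [hev]
    have hΨ := cpd_iterate_analyticOnNhd hΦ i k
    have hdiff := (hΨ _ hw).differentiableAt.hasFDerivAt
    have hcomp : HasDerivAt (fun w' => (cpd i)^[k] Φ (Function.update z i w'))
        ((fderiv ℂ ((cpd i)^[k] Φ) (Function.update z i w)) (Pi.single i 1)) w :=
      hdiff.comp_hasDerivAt w (hasDerivAt_update z i w)
    rw [hcomp.deriv, Function.iterate_succ_apply']
    rfl

/-- Cauchy estimate for iterated coordinate partials of an analytic function. -/
lemma cpd_iterate_bound {Ω : Set (Fin d → ℂ)} (hΩ : IsOpen Ω) {Φ : (Fin d → ℂ) → ℂ}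
    (hΦ : AnalyticOnNhd ℂ Φ Ω) {z : Fin d → ℂ} {i : Fin d} {R M : ℝ} (hR : 0 < R)
    (hsub : ∀ w : ℂ, dist w (z i) ≤ R → Function.update z i w ∈ Ω)
    (hM : ∀ w : ℂ, dist w (z i) ≤ R → ‖Φ (Function.update z i w)‖ ≤ M) (k : ℕ) :
    ‖(cpd i)^[k] Φ z‖ ≤ k.factorial * M / R ^ k := by
  have hzself : Function.update z i (z i) = z := Function.update_eq_self i z
  have hφdiff : DifferentiableOn ℂ (fun w => Φ (Function.update z i w)) (closedBall (z i) R) := by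
    intro w hw
    have h1 : DifferentiableAt ℂ Φ (Function.update z i w) :=
      (hΦ _ (hsub w (mem_closedBall.mp hw))).differentiableAt
    exact (h1.comp w (hasDerivAt_update z i w).differentiableAt).differentiableWithinAt
  have hb := cauchy_bound hR hφdiff (fun w hw => hM w (mem_closedBall.mp hw)) k
  have hmemz : Function.update z i (z i) ∈ Ω := hsub (z i) (by simp [hR.le])
  have hslice := cpd_iterate_slice hΩ hΦ z i k (z i) hmemz
  rw [hslice, hzself] at hb
  exact hb

/-- The inclusion `ℝ^d → ℂ^d`. -/
noncomputable def iotaL (d : ℕ) : EuclideanSpace ℝ (Fin d) →L[ℝ] (Fin d → ℂ) :=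
  ContinuousLinearMap.pi fun j => Complex.ofRealCLM.comp (EuclideanSpace.proj j)

lemma iotaL_apply (x : EuclideanSpace ℝ (Fin d)) (j : Fin d) :
    iotaL d x j = (x j : ℂ) := rfl

lemma iotaL_single (i : Fin d) :
    iotaL d (EuclideanSpace.single i (1:ℝ)) = Pi.single i (1:ℂ) := by
  funext j
  rw [iotaL_apply, EuclideanSpace.single_apply]
  by_cases hj : j = i
  · subst hj; simp
  · simp [hj, Pi.single_apply]

/-- Real partial derivative of the real part of an analytic function
restricted to real points. -/
lemma pderiv_re {Ω : Set (Fin d → ℂ)} (hΩ : IsOpen Ω) {G : (Fin d → ℂ) → ℂ}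
    (hG : AnalyticOnNhd ℂ G Ω) (i : Fin d) {h : EuclideanSpace ℝ (Fin d) → ℝ}
    (hh : ∀ x, iotaL d x ∈ Ω → h x = (G (iotaL d x)).re) :
    ∀ x, iotaL d x ∈ Ω → pderiv' i h x = ((cpd i G) (iotaL d x)).re := by
  intro x hx
  have hopen : IsOpen {y : EuclideanSpace ℝ (Fin d) | iotaL d y ∈ Ω} :=
    hΩ.preimage (iotaL d).continuous
  have hev : h =ᶠ[nhds x] fun y => (G (iotaL d y)).re := by
    filter_upwards [hopen.mem_nhds hx] with y hy using hh y hy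
  have hfd : HasFDerivAt (fun y => (G (iotaL d y)).re)
      ((Complex.reCLM.comp ((fderiv ℂ G (iotaL d x)).restrictScalars ℝ)).comp (iotaL d)) x := by
    have h1 : HasFDerivAt G (fderiv ℂ G (iotaL d x)) (iotaL d x) :=
      (hG _ hx).differentiableAt.hasFDerivAt
    have h2 := (h1.restrictScalars ℝ).comp x ((iotaL d).hasFDerivAt)
    exact (Complex.reCLM.hasFDerivAt).comp x h2
  show fderiv ℝ h x (EuclideanSpace.single i 1) = _
  rw [hev.fderiv_eq, hfd.fderiv]
  show Complex.reCLM (((fderiv ℂ G (iotaL d x)).restrictScalars ℝ)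
    (iotaL d (EuclideanSpace.single i 1))) = _
  rw [iotaL_single]
  rfl

lemma pderiv_iterate_re {Ω : Set (Fin d → ℂ)} (hΩ : IsOpen Ω) {G : (Fin d → ℂ) → ℂ}
    (hG : AnalyticOnNhd ℂ G Ω) (i : Fin d) (k : ℕ) {h : EuclideanSpace ℝ (Fin d) → ℝ}
    (hh : ∀ x, iotaL d x ∈ Ω → h x = (G (iotaL d x)).re) :
    ∀ x, iotaL d x ∈ Ω → (pderiv' i)^[k] h x = ((cpd i)^[k] G (iotaL d x)).re := by
  induction k generalizing G h with
  | zero => exact hh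
  | succ k ih =>
    intro x hx
    rw [Function.iterate_succ_apply', Function.iterate_succ_apply']
    exact pderiv_re hΩ (cpd_iterate_analyticOnNhd hG i k) i (ih hG hh) x hx

lemma foldG_analytic (α : Fin d → ℕ) (L : List (Fin d)) {Ω : Set (Fin d → ℂ)}
    {F : (Fin d → ℂ) → ℂ} (hF : AnalyticOnNhd ℂ F Ω) :
    AnalyticOnNhd ℂ (L.foldr (fun i G => (cpd i)^[α i] G) F) Ω := by
  induction L with
  | nil => exact hF
  | cons i L ih => exact cpd_iterate_analyticOnNhd ih i (α i)

lemma foldr_re {Ω : Set (Fin d → ℂ)} (hΩ : IsOpen Ω) (α : Fin d → ℕ) (L : List (Fin d))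
    {F : (Fin d → ℂ) → ℂ} (hF : AnalyticOnNhd ℂ F Ω) {E' : EuclideanSpace ℝ (Fin d) → ℝ}
    (hE : ∀ x, iotaL d x ∈ Ω → E' x = (F (iotaL d x)).re) :
    ∀ x, iotaL d x ∈ Ω → (L.foldr (fun i h => (pderiv' i)^[α i] h) E') x
      = ((L.foldr (fun i G => (cpd i)^[α i] G) F) (iotaL d x)).re := by
  induction L with
  | nil => exact hE
  | cons i L ih =>
    simp only [List.foldr_cons]
    exact pderiv_iterate_re hΩ (foldG_analytic α L hF) i (α i) ih

lemma foldr_bound {Ω : Set (Fin d → ℂ)} (hΩ : IsOpen Ω) (α : Fin d → ℕ)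
    {F : (Fin d → ℂ) → ℂ} (hF : AnalyticOnNhd ℂ F Ω)
    (τ : Fin d → ℂ) {R M : ℝ} (hR : 0 < R)
    (hsub : ∀ z : Fin d → ℂ, (∀ j, dist (z j) (τ j) ≤ R) → z ∈ Ω)
    (hMF : ∀ z : Fin d → ℂ, (∀ j, dist (z j) (τ j) ≤ R) → ‖F z‖ ≤ M) :
    ∀ L : List (Fin d), L.Nodup → ∀ z : Fin d → ℂ,
      (∀ j, dist (z j) (τ j) ≤ R) → (∀ j ∈ L, z j = τ j) →
      ‖(L.foldr (fun i G => (cpd i)^[α i] G) F) z‖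
        ≤ (L.map fun j => ((α j).factorial : ℝ) / R ^ (α j)).prod * M := by
  intro L
  induction L with
  | nil => intro _ z hz _; simpa using hMF z hz
  | cons i L ih =>
    intro hnd z hz hfr
    have hiL : i ∉ L := (List.nodup_cons.mp hnd).1
    have hndL : L.Nodup := (List.nodup_cons.mp hnd).2
    have hzi : z i = τ i := hfr i List.mem_cons_self
    simp only [List.foldr_cons, List.map_cons, List.prod_cons]
    have hupd : ∀ w : ℂ, dist w (z i) ≤ R → ∀ j, dist (Function.update z i w j) (τ j) ≤ R := by
      intro w hw j
      by_cases hj : j = i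
      · subst hj; rw [Function.update_self, ← hzi]; exact hw
      · rw [Function.update_of_ne hj]; exact hz j
    have hsub' : ∀ w : ℂ, dist w (z i) ≤ R → Function.update z i w ∈ Ω :=
      fun w hw => hsub _ (hupd w hw)
    have hM' : ∀ w : ℂ, dist w (z i) ≤ R →
        ‖(L.foldr (fun i G => (cpd i)^[α i] G) F) (Function.update z i w)‖
          ≤ (L.map fun j => ((α j).factorial : ℝ) / R ^ (α j)).prod * M := by
      intro w hw
      apply ih hndL _ (hupd w hw)
      intro j hj
      have hji : j ≠ i := fun hji => hiL (hji ▸ hj)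
      rw [Function.update_of_ne hji]
      exact hfr j (List.mem_cons_of_mem i hj)
    have key := cpd_iterate_bound hΩ (foldG_analytic α L hF) hR hsub' hM' (α i)
    calc ‖(cpd i)^[α i] (L.foldr (fun i G => (cpd i)^[α i] G) F) z‖
        ≤ (α i).factorial * ((L.map fun j => ((α j).factorial : ℝ) / R ^ (α j)).prod * M)
            / R ^ (α i) := key
      _ = ((α i).factorial : ℝ) / R ^ (α i)
            * (L.map fun j => ((α j).factorial : ℝ) / R ^ (α j)).prod * M := by ring

end FundSolAux

set_option maxHeartbeats 2000000 in
open FundSolAux Metric Complex in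
/-- Lemma 3.2: for `d ≥ 3`, `E(t) = |t|^{2−d}` and any multi-index `α` with
`|α| ≥ 1`, one has `|∂^α E(t)| ≤ C_d α! |α|^{(d−1)/2} (2d/|t|)^{|α|+d−2}`. -/
theorem fundamental_solution_deriv_bound' (d : ℕ) (hd : 3 ≤ d) :
    ∃ C : ℝ, 0 < C ∧
      ∀ (α : Fin d → ℕ), 1 ≤ ∑ i, α i →
      ∀ (t : EuclideanSpace ℝ (Fin d)), t ≠ 0 →
        |mpderiv α (fun y => ‖y‖ ^ ((2 : ℤ) - d)) t| ≤
          C * (∏ i, (Nat.factorial (α i) : ℝ)) *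
            ((∑ i, α i : ℕ) : ℝ) ^ (((d : ℝ) - 1) / 2) *
            (2 * d / ‖t‖) ^ ((∑ i, α i) + d - 2) := by
  refine ⟨1, one_pos, ?_⟩
  intro α hα t ht
  set c : ℝ := (2 - (d : ℝ)) / 2 with hc
  set Ω : Set (Fin d → ℂ) := {z | 0 < (∑ j, z j ^ 2).re} with hΩdef
  set F : (Fin d → ℂ) → ℂ := fun z => (∑ j, z j ^ 2) ^ (c : ℂ) with hFdef
  have hScont : Continuous fun z : Fin d → ℂ => (∑ j, z j ^ 2).re := by
    apply Complex.continuous_re.comp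
    exact continuous_finset_sum _ fun j _ => (continuous_apply j).pow 2
  have hΩ : IsOpen Ω := isOpen_lt continuous_const hScont
  -- analyticity of F on Ω
  have hS : AnalyticOnNhd ℂ (fun z : Fin d → ℂ => ∑ j, z j ^ 2) Ω := by
    intro z _
    exact Finset.analyticAt_fun_sum _ fun j _ =>
      ((ContinuousLinearMap.proj j : (Fin d → ℂ) →L[ℂ] ℂ).analyticAt z).pow 2
  have hcpow : AnalyticOnNhd ℂ (fun w : ℂ => w ^ (c : ℂ)) {w : ℂ | 0 < w.re} := by
    apply DifferentiableOn.analyticOnNhd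
    · intro w hw
      exact (differentiableAt_id.cpow (differentiableAt_const _)
        (Complex.mem_slitPlane_iff.mpr (Or.inl hw))).differentiableWithinAt
    · exact isOpen_lt continuous_const Complex.continuous_re
  have hF : AnalyticOnNhd ℂ F Ω := hcpow.comp hS fun z hz => hz
  -- basic real facts
  have htn : 0 < ‖t‖ := norm_pos_iff.mpr ht
  have hd0 : (0 : ℝ) < d := by
    have : (3:ℝ) ≤ d := by exact_mod_cast hd
    linarith
  have hdr : (3 : ℝ) ≤ d := by exact_mod_cast hd
  set R : ℝ := ‖t‖ / (2 * d) with hRdef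
  have hR : 0 < R := by positivity
  have hsum_sq : ∀ x : EuclideanSpace ℝ (Fin d), ∑ j, x j ^ 2 = ‖x‖ ^ 2 := by
    intro x
    rw [EuclideanSpace.norm_eq, Real.sq_sqrt (by positivity)]
    congr 1
    funext j
    rw [Real.norm_eq_abs]
    exact (_root_.sq_abs (x j)).symm
  have hSreal : ∀ x : EuclideanSpace ℝ (Fin d),
      (∑ j, (iotaL d x) j ^ 2) = ((‖x‖ ^ 2 : ℝ) : ℂ) := by
    intro x
    rw [← hsum_sq x]
    push_cast [iotaL_apply]
    norm_num
  -- real points are in Ω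
  have hmemΩ : ∀ x : EuclideanSpace ℝ (Fin d), x ≠ 0 → iotaL d x ∈ Ω := by
    intro x hx
    have hxn : 0 < ‖x‖ := norm_pos_iff.mpr hx
    show 0 < (∑ j, (iotaL d x) j ^ 2).re
    rw [hSreal x, Complex.ofReal_re]
    positivity
  -- base case of the real/complex correspondence
  have hE : ∀ x : EuclideanSpace ℝ (Fin d), iotaL d x ∈ Ω →
      ‖x‖ ^ ((2 : ℤ) - d) = (F (iotaL d x)).re := by
    intro x hx
    have hxn : 0 < ‖x‖ := by
      rcases eq_or_ne x 0 with rfl | hx0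
      · exfalso
        have h0 : (0:ℝ) < (∑ j, (iotaL d (0 : EuclideanSpace ℝ (Fin d))) j ^ 2).re := hx
        rw [hSreal 0, Complex.ofReal_re] at h0
        simp at h0
      · exact norm_pos_iff.mpr hx0
    have h1 : F (iotaL d x) = ((‖x‖ ^ 2 : ℝ) : ℂ) ^ (c : ℂ) := by
      show (∑ j, (iotaL d x) j ^ 2) ^ (c : ℂ) = _
      rw [hSreal x]
    have h2 : ((‖x‖ ^ 2 : ℝ) : ℂ) ^ (c : ℂ) = (((‖x‖ ^ 2 : ℝ) ^ c : ℝ) : ℂ) :=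
      (Complex.ofReal_cpow (by positivity) c).symm
    have h3 : (‖x‖ ^ 2 : ℝ) ^ c = ‖x‖ ^ ((2 : ℤ) - d) := by
      rw [← Real.rpow_natCast ‖x‖ 2, ← Real.rpow_mul (norm_nonneg x)]
      have he : (2 : ℕ) * c = (((2 - (d : ℤ) : ℤ) : ℤ) : ℝ) := by
        push_cast [hc]; ring
      rw [he, Real.rpow_intCast]
    rw [h1, h2, ← h3]
    simp
  -- Cauchy–Schwarz for the coordinates of t
  have hCS : ∑ j, |t j| ≤ Real.sqrt d * ‖t‖ := by
    have h1 : (∑ j, |t j|) ^ 2 ≤ (d : ℝ) * ∑ j, |t j| ^ 2 := by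
      simpa using sq_sum_le_card_mul_sum_sq (s := (Finset.univ : Finset (Fin d)))
        (f := fun j => |t j|)
    have h2 : ∑ j, |t j| ^ 2 = ‖t‖ ^ 2 := by
      rw [← hsum_sq t]
      congr 1; funext j; exact _root_.sq_abs (t j)
    rw [h2] at h1
    have h3 : 0 ≤ ∑ j, |t j| := Finset.sum_nonneg fun j _ => abs_nonneg _
    have h4 := Real.sqrt_le_sqrt h1
    rwa [Real.sqrt_sq h3, Real.sqrt_mul (by positivity), Real.sqrt_sq htn.le] at h4
  -- key polydisc estimate: the real part of the sum of squares stays large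
  have hest : ∀ z : Fin d → ℂ, (∀ j, dist (z j) ((iotaL d t) j) ≤ R) →
      ‖t‖ ^ 2 / 4 ≤ (∑ j, z j ^ 2).re := by
    intro z hz
    have habs : ‖(∑ j, z j ^ 2) - ((‖t‖ ^ 2 : ℝ) : ℂ)‖ ≤ (3 / 4) * ‖t‖ ^ 2 := by
      have hdiff : (∑ j, z j ^ 2) - ((‖t‖ ^ 2 : ℝ) : ℂ)
          = ∑ j, (z j ^ 2 - ((t j : ℝ) : ℂ) ^ 2) := by
        rw [Finset.sum_sub_distrib, ← hSreal t]
        rfl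
      rw [hdiff]
      have hterm : ∀ j : Fin d, ‖z j ^ 2 - ((t j : ℝ) : ℂ) ^ 2‖
          ≤ R * R + 2 * R * |t j| := by
        intro j
        have hfac : z j ^ 2 - ((t j : ℝ) : ℂ) ^ 2
            = (z j - (t j : ℝ)) * (z j + (t j : ℝ)) := by ring
        rw [hfac, norm_mul]
        have h1 : ‖z j - ((t j : ℝ) : ℂ)‖ ≤ R := by
          have h := hz j
          rwa [Complex.dist_eq, iotaL_apply] at h
        have h2 : ‖z j + ((t j : ℝ) : ℂ)‖ ≤ R + 2 * |t j| := by
          have he : z j + ((t j : ℝ) : ℂ) = (z j - (t j : ℝ)) + 2 * ((t j : ℝ) : ℂ) := by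
            ring
          rw [he]
          refine le_trans (norm_add_le _ _) ?_
          have h3 : ‖2 * ((t j : ℝ) : ℂ)‖ = 2 * |t j| := by
            rw [norm_mul, Complex.norm_real, Real.norm_eq_abs]
            norm_num
          rw [h3]
          gcongr
        calc ‖z j - ((t j : ℝ) : ℂ)‖ * ‖z j + ((t j : ℝ) : ℂ)‖
            ≤ R * (R + 2 * |t j|) :=
              mul_le_mul h1 h2 (norm_nonneg _) hR.le
          _ = R * R + 2 * R * |t j| := by ring
      calc ‖∑ j, (z j ^ 2 - ((t j : ℝ) : ℂ) ^ 2)‖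
          ≤ ∑ j, ‖z j ^ 2 - ((t j : ℝ) : ℂ) ^ 2‖ :=
            norm_sum_le _ _
        _ ≤ ∑ j : Fin d, (R * R + 2 * R * |t j|) := Finset.sum_le_sum fun j _ => hterm j
        _ = d * (R * R) + 2 * R * ∑ j, |t j| := by
            rw [Finset.sum_add_distrib, Finset.sum_const, Finset.card_univ, Fintype.card_fin,
              ← Finset.mul_sum]
            push_cast
            ring
        _ ≤ d * (R * R) + 2 * R * (Real.sqrt d * ‖t‖) := by gcongr
        _ ≤ (3 / 4) * ‖t‖ ^ 2 := by
            have hs2 : Real.sqrt d ^ 2 = (d : ℝ) := Real.sq_sqrt hd0.le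
            have hs32 : (3 / 2 : ℝ) ≤ Real.sqrt d := by
              nlinarith [Real.sqrt_nonneg (d : ℝ)]
            have hRval : R = ‖t‖ / (2 * d) := hRdef
            rw [hRval]
            have hd0' : (d : ℝ) ≠ 0 := hd0.ne'
            have e1 : (d : ℝ) * (‖t‖ / (2 * d) * (‖t‖ / (2 * d))) = ‖t‖ ^ 2 / (4 * d) := by
              field_simp
              ring
            have e2 : 2 * (‖t‖ / (2 * d)) * (Real.sqrt d * ‖t‖)
                = ‖t‖ ^ 2 * Real.sqrt d / d := by
              field_simp
            rw [e1, e2]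
            have b1 : ‖t‖ ^ 2 / (4 * d) ≤ ‖t‖ ^ 2 / 12 := by
              gcongr
              linarith
            have b2 : ‖t‖ ^ 2 * Real.sqrt d / d ≤ (2 / 3) * ‖t‖ ^ 2 := by
              rw [div_le_iff₀ hd0]
              have h5 : (0:ℝ) ≤ (Real.sqrt d - 3 / 2) * Real.sqrt d :=
                mul_nonneg (by linarith) (Real.sqrt_nonneg _)
              nlinarith [mul_nonneg h5 (sq_nonneg ‖t‖), sq_nonneg ‖t‖]
            nlinarith [sq_nonneg ‖t‖]
    have hre : ((∑ j, z j ^ 2) - ((‖t‖ ^ 2 : ℝ) : ℂ)).re ≥ -((3 / 4) * ‖t‖ ^ 2) := by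
      have h6 := (abs_le.mp ((Complex.abs_re_le_norm _).trans habs)).1
      linarith
    have hre2 : ((∑ j, z j ^ 2) - ((‖t‖ ^ 2 : ℝ) : ℂ)).re
        = (∑ j, z j ^ 2).re - ‖t‖ ^ 2 := by
      rw [Complex.sub_re, Complex.ofReal_re]
    rw [hre2] at hre
    linarith
  -- membership of the polydisc in Ω
  have hsub : ∀ z : Fin d → ℂ, (∀ j, dist (z j) ((iotaL d t) j) ≤ R) → z ∈ Ω := by
    intro z hz
    show 0 < (∑ j, z j ^ 2).re
    have := hest z hz
    nlinarith [sq_nonneg ‖t‖]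
  -- bound for F on the polydisc
  set M : ℝ := (2 / ‖t‖) ^ (d - 2) with hMdef
  have hMval : (‖t‖ ^ 2 / 4) ^ c = M := by
    have h1 : ‖t‖ ^ 2 / 4 = (‖t‖ / 2) ^ (2 : ℕ) := by ring
    rw [h1, ← Real.rpow_natCast (‖t‖ / 2) 2, ← Real.rpow_mul (by positivity)]
    have h2 : (2 : ℕ) * c = -(((d - 2 : ℕ) : ℕ) : ℝ) := by
      have : ((d - 2 : ℕ) : ℝ) = (d : ℝ) - 2 := by
        have : (2 : ℕ) ≤ d := by omega
        push_cast [Nat.cast_sub this]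
        ring
      rw [this, hc]
      push_cast
      ring
    rw [h2, Real.rpow_neg (by positivity), Real.rpow_natCast, ← inv_pow, inv_div, hMdef]
  have hMF : ∀ z : Fin d → ℂ, (∀ j, dist (z j) ((iotaL d t) j) ≤ R) → ‖F z‖ ≤ M := by
    intro z hz
    have h1 : ‖t‖ ^ 2 / 4 ≤ (∑ j, z j ^ 2).re := hest z hz
    have hq : (0:ℝ) < ‖t‖ ^ 2 / 4 := by positivity
    have hz0 : (∑ j, z j ^ 2) ≠ 0 := by
      intro h0
      rw [h0] at h1
      simp at h1
      nlinarith
    have h2 : ‖F z‖ = ‖∑ j, z j ^ 2‖ ^ c := by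
      rw [hFdef]
      show ‖(∑ j, z j ^ 2) ^ (c : ℂ)‖ = _
      rw [Complex.norm_cpow_of_ne_zero hz0]
      simp [Complex.ofReal_re, Complex.ofReal_im]
    have h3 : ‖t‖ ^ 2 / 4 ≤ ‖∑ j, z j ^ 2‖ :=
      le_trans h1 (Complex.re_le_norm _)
    have hc0 : c ≤ 0 := by
      rw [hc]
      nlinarith
    rw [h2, ← hMval]
    exact Real.rpow_le_rpow_of_nonpos hq h3 hc0
  -- put everything together
  set n : ℕ := ∑ i, α i with hn
  have hreq : mpderiv α (fun y => ‖y‖ ^ ((2 : ℤ) - d)) t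
      = (((List.finRange d).foldr (fun i G => (cpd i)^[α i] G) F) (iotaL d t)).re :=
    foldr_re hΩ α (List.finRange d) hF hE t (hmemΩ t ht)
  have hfro : ∀ j ∈ List.finRange d, (iotaL d t) j = (iotaL d t) j := fun _ _ => rfl
  have hdist : ∀ j, dist ((iotaL d t) j) ((iotaL d t) j) ≤ R := by
    intro j; simp [hR.le]
  have hb := foldr_bound hΩ α hF (iotaL d t) hR hsub hMF (List.finRange d)
    (List.nodup_finRange d) (iotaL d t) hdist hfro
  have hprod : ((List.finRange d).map fun j => ((α j).factorial : ℝ) / R ^ (α j)).prod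
      = (∏ i, ((α i).factorial : ℝ)) / R ^ n := by
    rw [← Fin.prod_univ_def, Finset.prod_div_distrib, Finset.prod_pow_eq_pow_sum]
  rw [hprod] at hb
  have habs : |mpderiv α (fun y => ‖y‖ ^ ((2 : ℤ) - d)) t|
      ≤ (∏ i, ((α i).factorial : ℝ)) / R ^ n * M := by
    rw [hreq]
    refine le_trans (Complex.abs_re_le_norm _) ?_
    exact hb
  refine le_trans habs ?_
  -- final numeric comparison
  set Q : ℝ := 2 * d / ‖t‖ with hQ
  have hQ0 : 0 < Q := by positivity
  have hRQ : R⁻¹ = Q := by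
    rw [hRdef, hQ, inv_div]
  have hL : (∏ i, ((α i).factorial : ℝ)) / R ^ n * M
      = (∏ i, ((α i).factorial : ℝ)) * (Q ^ n * M) := by
    rw [div_eq_mul_inv, ← inv_pow, hRQ]
    ring
  rw [hL]
  have hMQ : M ≤ Q ^ (d - 2) := by
    rw [hMdef, hQ]
    have h7 : (2:ℝ) / ‖t‖ ≤ 2 * d / ‖t‖ := by
      gcongr
      linarith
    exact pow_le_pow_left₀ (by positivity) h7 _
  have hQQ : Q ^ n * Q ^ (d - 2) = Q ^ (n + d - 2) := by
    rw [← pow_add]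
    congr 1
    omega
  have hd2 : (0:ℝ) ≤ ((d:ℝ) - 1) / 2 := by linarith
  have hn1 : (1:ℝ) ≤ ((n : ℕ) : ℝ) := Nat.one_le_cast.mpr hα
  have hpow1 : (1 : ℝ) ≤ ((n : ℕ) : ℝ) ^ (((d : ℝ) - 1) / 2) :=
    Real.one_le_rpow hn1 hd2
  have hprodpos : (0:ℝ) ≤ ∏ i, ((α i).factorial : ℝ) :=
    Finset.prod_nonneg fun i _ => by positivity
  calc (∏ i, ((α i).factorial : ℝ)) * (Q ^ n * M)
      ≤ (∏ i, ((α i).factorial : ℝ)) * (Q ^ n * Q ^ (d - 2)) :=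
        mul_le_mul_of_nonneg_left
          (mul_le_mul_of_nonneg_left hMQ (pow_nonneg hQ0.le n)) hprodpos
    _ = (∏ i, ((α i).factorial : ℝ)) * Q ^ (n + d - 2) := by rw [hQQ]
    _ ≤ 1 * (∏ i, ((α i).factorial : ℝ)) * ((n : ℝ) ^ (((d : ℝ) - 1) / 2)) * Q ^ (n + d - 2) := by
        rw [one_mul]
        have := mul_le_mul_of_nonneg_right
          (mul_le_mul_of_nonneg_left hpow1 hprodpos) (pow_nonneg hQ0.le (n + d - 2))
        calc (∏ i, ((α i).factorial : ℝ)) * Q ^ (n + d - 2)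
            = ((∏ i, ((α i).factorial : ℝ)) * 1) * Q ^ (n + d - 2) := by ring
          _ ≤ ((∏ i, ((α i).factorial : ℝ)) * ((n:ℝ) ^ (((d : ℝ) - 1) / 2))) * Q ^ (n + d - 2) :=
              this
          _ = (∏ i, ((α i).factorial : ℝ)) * ((n:ℝ) ^ (((d : ℝ) - 1) / 2)) * Q ^ (n + d - 2) := by
              ring
end

section
/- For every dimension d ≥ 1 there is a constant C_d such that for every multi-index α ∈ ℕ^d with |α| ≥ 1, |α|! ≤ C_d · α! · |α|^{(1−d)/2} · d^{|α|}. -/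
open Real Stirling

lemma stirling_seq_bounds (n : ℕ) (hn : 1 ≤ n) : 1 ≤ stirlingSeq n ∧ stirlingSeq n ≤ 2 := by
  obtain ⟨m, rfl⟩ := Nat.exists_eq_add_of_le hn
  have hsucc : (1 + m) = Nat.succ m := by omega
  constructor
  · have h1 : √π ≤ (stirlingSeq ∘ Nat.succ) m :=
      Antitone.le_of_tendsto stirlingSeq'_antitone
        (tendsto_stirlingSeq_sqrt_pi.comp (Filter.tendsto_add_atTop_nat 1)) m
    have h2 : (1:ℝ) ≤ √π := by
      rw [show (1:ℝ) = √1 by simp]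
      exact Real.sqrt_le_sqrt (by nlinarith [Real.pi_gt_three])
    rw [hsucc]; exact h2.trans h1
  · have h1 : (stirlingSeq ∘ Nat.succ) m ≤ (stirlingSeq ∘ Nat.succ) 0 :=
      stirlingSeq'_antitone (Nat.zero_le m)
    have h2 : stirlingSeq 1 ≤ 2 := by
      rw [stirlingSeq_one, div_le_iff₀ (by positivity)]
      nlinarith [Real.exp_one_lt_d9, Real.sq_sqrt (by norm_num : (0:ℝ) ≤ 2),
        Real.sqrt_nonneg 2, Real.exp_pos 1]
    rw [hsucc]; exact h1.trans h2

lemma stirling_two_sided (n : ℕ) (hn : 1 ≤ n) :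
    Real.sqrt (2*n) * ((n:ℝ)/Real.exp 1)^n ≤ (n.factorial : ℝ) ∧
    (n.factorial : ℝ) ≤ 2 * (Real.sqrt (2*n) * ((n:ℝ)/Real.exp 1)^n) := by
  obtain ⟨h1, h2⟩ := stirling_seq_bounds n hn
  have hd : 0 < Real.sqrt (2*n) * ((n:ℝ)/Real.exp 1)^n := by
    have : (0:ℝ) < n := by exact_mod_cast hn
    positivity
  have hs : stirlingSeq n = (n.factorial : ℝ) / (Real.sqrt (2*n) * ((n:ℝ)/Real.exp 1)^n) := rfl
  rw [hs, le_div_iff₀ hd] at h1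
  rw [hs, div_le_iff₀ hd] at h2
  constructor <;> linarith
lemma jensen_gamma (d : ℕ) (hd : 1 ≤ d) (α : Fin d → ℕ) :
    Real.Gamma (((∑ i, α i : ℕ):ℝ)/(d:ℝ) + 1) ^ d ≤ ∏ i, ((α i).factorial : ℝ) := by
  have hd0 : (0:ℝ) < d := by exact_mod_cast hd
  have key := Real.convexOn_log_Gamma.map_sum_le (t := Finset.univ)
    (w := fun _ : Fin d => 1/(d:ℝ)) (p := fun i => (α i : ℝ) + 1)
    (fun i _ => by positivity)
    (by simp [Finset.card_univ]; field_simp)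
    (fun i _ => by have : (0:ℝ) ≤ (α i : ℝ) := Nat.cast_nonneg _; simp; positivity)
  have hsum : ∑ i, (1/(d:ℝ)) • ((α i : ℝ) + 1) = ((∑ i, α i : ℕ):ℝ)/(d:ℝ) + 1 := by
    simp only [smul_eq_mul, ← Finset.mul_sum, Finset.sum_add_distrib]
    push_cast
    simp [Finset.card_univ]
    field_simp
  rw [hsum] at key
  have hrhs : ∑ i, (1/(d:ℝ)) • (Real.log ∘ Real.Gamma) ((α i : ℝ) + 1)
      = (1/(d:ℝ)) * Real.log (∏ i, ((α i).factorial : ℝ)) := by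
    rw [Real.log_prod (fun i _ => by positivity), Finset.mul_sum]
    congr 1; ext i
    simp [Real.Gamma_nat_eq_factorial]
  rw [hrhs] at key
  have hΓpos : 0 < Real.Gamma (((∑ i, α i : ℕ):ℝ)/(d:ℝ) + 1) :=
    Real.Gamma_pos_of_pos (by positivity)
  have hPpos : 0 < ∏ i, ((α i).factorial : ℝ) :=
    Finset.prod_pos (fun i _ => by positivity)
  have key2 : (d:ℝ) * Real.log (Real.Gamma (((∑ i, α i : ℕ):ℝ)/(d:ℝ) + 1))
      ≤ Real.log (∏ i, ((α i).factorial : ℝ)) := by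
    have := mul_le_mul_of_nonneg_left key hd0.le
    calc (d:ℝ) * Real.log (Real.Gamma (((∑ i, α i : ℕ):ℝ)/(d:ℝ) + 1))
        = (d:ℝ) * (Real.log ∘ Real.Gamma) (((∑ i, α i : ℕ):ℝ)/(d:ℝ) + 1) := rfl
      _ ≤ (d:ℝ) * ((1/(d:ℝ)) * Real.log (∏ i, ((α i).factorial : ℝ))) := this
      _ = Real.log (∏ i, ((α i).factorial : ℝ)) := by field_simp
  calc Real.Gamma (((∑ i, α i : ℕ):ℝ)/(d:ℝ) + 1) ^ d
      = Real.exp ((d:ℝ) * Real.log (Real.Gamma (((∑ i, α i : ℕ):ℝ)/(d:ℝ) + 1))) := by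
        rw [Real.exp_nat_mul, Real.exp_log hΓpos]
    _ ≤ Real.exp (Real.log (∏ i, ((α i).factorial : ℝ))) := Real.exp_le_exp.mpr key2
    _ = ∏ i, ((α i).factorial : ℝ) := Real.exp_log hPpos

lemma gamma_chord (s : ℝ) (M : ℕ) (hs : 0 ≤ s) (hsM : s < M) :
    (M.factorial : ℝ) * ((M:ℝ)+1) ^ (s - (M:ℝ)) ≤ Real.Gamma (s+1) := by
  have h1 : (0:ℝ) < s + 1 := by linarith
  have hM1 : s + 1 < (M:ℝ) + 1 := by linarith
  have key := Real.convexOn_log_Gamma.slope_mono_adjacent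
    (x := s+1) (y := (M:ℝ)+1) (z := (M:ℝ)+2)
    (Set.mem_Ioi.mpr h1) (Set.mem_Ioi.mpr (by positivity)) hM1 (by linarith)
  have hfy : (Real.log ∘ Real.Gamma) ((M:ℝ)+1) = Real.log (M.factorial : ℝ) := by
    simp [Real.Gamma_nat_eq_factorial]
  have hfz : (Real.log ∘ Real.Gamma) ((M:ℝ)+2) = Real.log ((M+1).factorial : ℝ) := by
    have : ((M:ℝ)+2) = ((M+1:ℕ):ℝ) + 1 := by push_cast; ring
    rw [Function.comp_apply, this, Real.Gamma_nat_eq_factorial]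
  rw [hfy, hfz] at key
  have hden1 : (M:ℝ)+1 - (s+1) = (M:ℝ) - s := by ring
  have hden2 : (M:ℝ)+2 - ((M:ℝ)+1) = 1 := by ring
  rw [hden1, hden2, div_one] at key
  have hlog : Real.log ((M+1).factorial : ℝ) - Real.log (M.factorial : ℝ)
      = Real.log ((M:ℝ)+1) := by
    rw [Nat.factorial_succ]
    push_cast
    rw [Real.log_mul (by positivity) (by positivity)]
    ring
  rw [hlog] at key
  have hMs : (0:ℝ) < (M:ℝ) - s := by linarith
  rw [div_le_iff₀ hMs] at key
  have key2 : Real.log (M.factorial : ℝ) + (s - (M:ℝ)) * Real.log ((M:ℝ)+1)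
      ≤ Real.log (Real.Gamma (s+1)) := by
    simp only [Function.comp_apply] at key
    nlinarith [key]
  have hΓpos : 0 < Real.Gamma (s+1) := Real.Gamma_pos_of_pos h1
  calc (M.factorial : ℝ) * ((M:ℝ)+1) ^ (s - (M:ℝ))
      = Real.exp (Real.log (M.factorial : ℝ) + (s - (M:ℝ)) * Real.log ((M:ℝ)+1)) := by
        rw [Real.exp_add, Real.exp_log (by positivity),
          Real.rpow_def_of_pos (by positivity : (0:ℝ) < (M:ℝ)+1)]
        ring_nf
    _ ≤ Real.exp (Real.log (Real.Gamma (s+1))) := Real.exp_le_exp.mpr key2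
    _ = Real.Gamma (s+1) := Real.exp_log hΓpos
lemma coeff_ineq (d k : ℕ) (hd : 1 ≤ d) (hkd : k ≤ d) :
    2*Real.sqrt 2 * 6^k * (Real.sqrt d)^d ≤ (4*6^d*(d:ℝ)^d) * (Real.sqrt 2)^d := by
  have hd0 : (1:ℝ) ≤ d := by exact_mod_cast hd
  have h2 : Real.sqrt 2 ≤ 2 := by
    have : √(2:ℝ) ≤ √((2:ℝ)^2) := Real.sqrt_le_sqrt (by norm_num)
    rwa [Real.sqrt_sq (by norm_num)] at this
  have hsd : Real.sqrt d ≤ (d:ℝ) := by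
    have : √(d:ℝ) ≤ √((d:ℝ)^2) := Real.sqrt_le_sqrt (by nlinarith)
    rwa [Real.sqrt_sq (by positivity)] at this
  have h1 : 2*Real.sqrt 2 * 6^k * (Real.sqrt d)^d ≤ 4*6^d*(d:ℝ)^d := by
    have e1 : 2*Real.sqrt 2 ≤ 4 := by nlinarith
    have e2 : (6:ℝ)^k ≤ 6^d := pow_le_pow_right₀ (by norm_num) hkd
    have e3 : (Real.sqrt d)^d ≤ (d:ℝ)^d := pow_le_pow_left₀ (Real.sqrt_nonneg _) hsd d
    have := mul_le_mul (mul_le_mul e1 e2 (by positivity) (by norm_num)) e3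
      (by positivity) (by positivity)
    linarith
  calc 2*Real.sqrt 2 * 6^k * (Real.sqrt d)^d ≤ 4*6^d*(d:ℝ)^d := h1
    _ ≤ (4*6^d*(d:ℝ)^d) * (Real.sqrt 2)^d :=
        le_mul_of_one_le_right (by positivity) (one_le_pow₀ (by
          rw [show (1:ℝ) = √1 by simp]; exact Real.sqrt_le_sqrt (by norm_num)))

lemma G3 (d n M k : ℕ) (hd : 1 ≤ d) (hn : 1 ≤ n) (hM : 1 ≤ M) (hkd : k ≤ d)
    (hMd : M * d = n + k) :
    2*Real.sqrt 2 * (Real.exp 1)^k * ((M:ℝ)+1)^k * (n:ℝ)^n * (Real.sqrt n)^d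
      ≤ (4*6^d*(d:ℝ)^d) * (Real.sqrt 2)^d * (Real.sqrt M)^d * ((M:ℝ)^M)^d * (d:ℝ)^n := by
  have hn' : (n:ℝ) ≤ (M:ℝ)*(d:ℝ) := by
    have : n ≤ M * d := by omega
    exact_mod_cast this
  have hM1 : ((M:ℝ)+1) ≤ 2*(M:ℝ) := by
    have : (1:ℝ) ≤ M := by exact_mod_cast hM
    linarith
  have he3 : Real.exp 1 ≤ 3 := by nlinarith [Real.exp_one_lt_d9]
  have step1 : 2*Real.sqrt 2 * (Real.exp 1)^k * ((M:ℝ)+1)^k * (n:ℝ)^n * (Real.sqrt n)^d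
      ≤ 2*Real.sqrt 2 * (3:ℝ)^k * (2*(M:ℝ))^k * ((M:ℝ)*(d:ℝ))^n * (Real.sqrt ((M:ℝ)*(d:ℝ)))^d := by
    gcongr <;>
      first
        | positivity
        | exact he3
        | exact hM1
        | exact hn'
        | exact Real.sqrt_le_sqrt hn'
        | exact (Real.exp_pos 1).le
        | exact Real.sqrt_nonneg _
  have step2 : 2*Real.sqrt 2 * (3:ℝ)^k * (2*(M:ℝ))^k * ((M:ℝ)*(d:ℝ))^n * (Real.sqrt ((M:ℝ)*(d:ℝ)))^d
      = (2*Real.sqrt 2 * 6^k * (Real.sqrt d)^d) * ((M:ℝ)^n * (M:ℝ)^k * (Real.sqrt M)^d * (d:ℝ)^n) := by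
    rw [Real.sqrt_mul (by positivity), mul_pow, mul_pow, mul_pow,
      show (6:ℝ)^k = 2^k * 3^k by rw [← mul_pow]; norm_num]
    ring
  have step3 : (M:ℝ)^n * (M:ℝ)^k = ((M:ℝ)^M)^d := by
    rw [← pow_add, ← pow_mul, mul_comm M d, mul_comm d M, hMd]
  calc 2*Real.sqrt 2 * (Real.exp 1)^k * ((M:ℝ)+1)^k * (n:ℝ)^n * (Real.sqrt n)^d
      ≤ 2*Real.sqrt 2 * (3:ℝ)^k * (2*(M:ℝ))^k * ((M:ℝ)*(d:ℝ))^n * (Real.sqrt ((M:ℝ)*(d:ℝ)))^d := step1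
    _ = (2*Real.sqrt 2 * 6^k * (Real.sqrt d)^d) * ((M:ℝ)^n * (M:ℝ)^k * (Real.sqrt M)^d * (d:ℝ)^n) := step2
    _ ≤ ((4*6^d*(d:ℝ)^d) * (Real.sqrt 2)^d) * ((M:ℝ)^n * (M:ℝ)^k * (Real.sqrt M)^d * (d:ℝ)^n) := by
        exact mul_le_mul_of_nonneg_right (coeff_ineq d k hd hkd) (by positivity)
    _ = (4*6^d*(d:ℝ)^d) * (Real.sqrt 2)^d * (Real.sqrt M)^d * ((M:ℝ)^M)^d * (d:ℝ)^n := by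
        rw [← step3]; ring
lemma final_ineq (d n M k : ℕ) (hd : 1 ≤ d) (hn : 1 ≤ n) (hM : 1 ≤ M) (hkd : k ≤ d)
    (hMd : M * d = n + k) :
    2 * (Real.sqrt (2*n) * ((n:ℝ)/Real.exp 1)^n)
      ≤ (4*6^d*(d:ℝ)^d) * ((Real.sqrt (2*M) * ((M:ℝ)/Real.exp 1)^M)^d * (((M:ℝ)+1)^k)⁻¹)
        * (n:ℝ) ^ ((1-(d:ℝ))/2) * (d:ℝ)^n := by
  have hn0 : (0:ℝ) < n := by exact_mod_cast hn
  have hsn : (0:ℝ) < Real.sqrt n := Real.sqrt_pos.mpr hn0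
  have hx2 : (n:ℝ) ^ ((1-(d:ℝ))/2) = Real.sqrt n * ((Real.sqrt n)^d)⁻¹ := by
    rw [show (1-(d:ℝ))/2 = 1/2 + (-(1/2*(d:ℕ))) by push_cast; ring, Real.rpow_add hn0,
      Real.rpow_neg hn0.le, Real.rpow_mul hn0.le, Real.rpow_natCast, ← Real.sqrt_eq_rpow]
  set e := Real.exp 1 with he_def
  have he : (0:ℝ) < e := Real.exp_pos 1
  set C : ℝ := 4*6^d*(d:ℝ)^d with hC
  set X : ℝ := 2*Real.sqrt (2*n)*(n:ℝ)^n*e^k*((M:ℝ)+1)^k*(Real.sqrt n)^d with hX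
  set Y : ℝ := C*(Real.sqrt (2*M))^d*((M:ℝ)^M)^d*Real.sqrt n*(d:ℝ)^n with hY
  set D : ℝ := e^n*e^k*((M:ℝ)+1)^k*(Real.sqrt n)^d with hD
  have hDpos : (0:ℝ) < D := by positivity
  have hXY : X ≤ Y := by
    have g := G3 d n M k hd hn hM hkd hMd
    calc X = (2*Real.sqrt 2*e^k*((M:ℝ)+1)^k*(n:ℝ)^n*(Real.sqrt n)^d)*Real.sqrt n := by
          rw [hX, Real.sqrt_mul (by norm_num : (0:ℝ) ≤ 2) (n:ℝ)]; ring
      _ ≤ (C*(Real.sqrt 2)^d*(Real.sqrt M)^d*((M:ℝ)^M)^d*(d:ℝ)^n)*Real.sqrt n :=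
          mul_le_mul_of_nonneg_right g (Real.sqrt_nonneg _)
      _ = Y := by rw [hY, Real.sqrt_mul (by norm_num : (0:ℝ) ≤ 2) (M:ℝ), mul_pow]; ring
  have hMne : (((M:ℝ)+1)^k) ≠ 0 := by positivity
  have hsne : ((Real.sqrt (n:ℝ))^d) ≠ 0 := by positivity
  have hene : (e:ℝ) ≠ 0 := he.ne'
  have hL : 2 * (Real.sqrt (2*n) * ((n:ℝ)/e)^n) = X * D⁻¹ := by
    rw [hX, hD, div_pow]
    field_simp
  have hR : C * ((Real.sqrt (2*M) * ((M:ℝ)/e)^M)^d * (((M:ℝ)+1)^k)⁻¹)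
        * (n:ℝ) ^ ((1-(d:ℝ))/2) * (d:ℝ)^n = Y * D⁻¹ := by
    rw [hx2, hY, hD, div_pow, mul_pow]
    field_simp
    rw [div_pow, show ((e:ℝ)^M)^d = e^n*e^k by rw [← pow_mul, hMd, pow_add], mul_div_assoc',
      div_mul_eq_mul_div, div_mul_eq_mul_div, div_eq_iff (by positivity)]
    ring
  rw [hL, hR]
  exact mul_le_mul_of_nonneg_right hXY (inv_nonneg.mpr hDpos.le)

/-- Stirling-type multi-index inequality: for every `d ≥ 1` there is `C_d`
such that `|α|! ≤ C_d α! |α|^{(1−d)/2} d^{|α|}` for all multi-indices `α`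
with `|α| ≥ 1`. -/
theorem multiindex_factorial_bound (d : ℕ) (hd : 1 ≤ d) :
    ∃ C : ℝ, 0 < C ∧
      ∀ α : Fin d → ℕ, 1 ≤ ∑ i, α i →
        (Nat.factorial (∑ i, α i) : ℝ) ≤
          C * (∏ i, (Nat.factorial (α i) : ℝ)) *
            ((∑ i, α i : ℕ) : ℝ) ^ ((1 - (d : ℝ)) / 2) * (d : ℝ) ^ (∑ i, α i) := by
  have hd0 : (0:ℝ) < (d:ℝ) := by exact_mod_cast hd
  refine ⟨4*6^d*(d:ℝ)^d, by positivity, ?_⟩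
  intro α hn
  obtain ⟨n, hn_def⟩ : ∃ m : ℕ, ∑ i, α i = m := ⟨_, rfl⟩
  rw [hn_def] at hn ⊢
  have hn1 : 1 ≤ n := hn
  obtain ⟨M, k, hMd, hk1, hkd, hM1⟩ :
      ∃ M k, M * d = n + k ∧ 1 ≤ k ∧ k ≤ d ∧ 1 ≤ M := by
    have h1 := Nat.div_add_mod n d
    have h2 : n % d < d := Nat.mod_lt _ (by omega)
    have h3 : (n / d + 1) * d = d * (n / d) + d := by ring
    generalize hq : n / d = q at h1 h3
    generalize hr : n % d = r at h1 h2
    generalize hp : d * q = p at h1 h3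
    refine ⟨q + 1, d - r, ?_, by omega, by omega, by omega⟩
    rw [h3]
    omega
  have hn0 : (0:ℝ) < n := by exact_mod_cast hn1
  have hM0 : (0:ℝ) < M := by exact_mod_cast hM1
  have hsM : (n:ℝ)/(d:ℝ) < (M:ℝ) := by
    rw [div_lt_iff₀ hd0]
    have : n < M * d := by omega
    exact_mod_cast this
  have hQ : (Real.sqrt (2*M) * ((M:ℝ)/Real.exp 1)^M)^d * (((M:ℝ)+1)^k)⁻¹
      ≤ ∏ i, ((α i).factorial : ℝ) := by
    have chord := gamma_chord ((n:ℝ)/(d:ℝ)) M (by positivity) hsM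
    have jensen := jensen_gamma d hd α
    rw [hn_def] at jensen
    have slow := (stirling_two_sided M hM1).1
    have hrp : (0:ℝ) ≤ ((M:ℝ)+1) ^ ((n:ℝ)/(d:ℝ) - (M:ℝ)) := Real.rpow_nonneg (by positivity) _
    have c1 : (Real.sqrt (2*M) * ((M:ℝ)/Real.exp 1)^M) * ((M:ℝ)+1) ^ ((n:ℝ)/(d:ℝ) - (M:ℝ))
        ≤ Real.Gamma ((n:ℝ)/(d:ℝ) + 1) :=
      le_trans (mul_le_mul_of_nonneg_right slow hrp) chord
    have c2 : ((Real.sqrt (2*M) * ((M:ℝ)/Real.exp 1)^M) * ((M:ℝ)+1) ^ ((n:ℝ)/(d:ℝ) - (M:ℝ)))^d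
        ≤ Real.Gamma ((n:ℝ)/(d:ℝ) + 1)^d :=
      pow_le_pow_left₀ (by positivity) c1 d
    have hexp : (((M:ℝ)+1) ^ ((n:ℝ)/(d:ℝ) - (M:ℝ)))^d = (((M:ℝ)+1)^k)⁻¹ := by
      have hb : (0:ℝ) ≤ (M:ℝ)+1 := by positivity
      have hee : ((n:ℝ)/(d:ℝ) - (M:ℝ)) * (d:ℕ) = -(k:ℝ) := by
        have hkr : (M:ℝ)*(d:ℝ) = (n:ℝ) + (k:ℝ) := by exact_mod_cast hMd
        field_simp
        linarith
      rw [← Real.rpow_natCast (((M:ℝ)+1) ^ ((n:ℝ)/(d:ℝ) - (M:ℝ))) d, ← Real.rpow_mul hb, hee,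
        Real.rpow_neg hb, Real.rpow_natCast]
    calc (Real.sqrt (2*M) * ((M:ℝ)/Real.exp 1)^M)^d * (((M:ℝ)+1)^k)⁻¹
        = ((Real.sqrt (2*M) * ((M:ℝ)/Real.exp 1)^M) * ((M:ℝ)+1) ^ ((n:ℝ)/(d:ℝ) - (M:ℝ)))^d := by
          rw [← hexp, ← mul_pow]
      _ ≤ Real.Gamma ((n:ℝ)/(d:ℝ) + 1)^d := c2
      _ ≤ ∏ i, ((α i).factorial : ℝ) := jensen
  calc (n.factorial : ℝ)
      ≤ 2 * (Real.sqrt (2*n) * ((n:ℝ)/Real.exp 1)^n) := (stirling_two_sided n hn1).2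
    _ ≤ (4*6^d*(d:ℝ)^d) * ((Real.sqrt (2*M) * ((M:ℝ)/Real.exp 1)^M)^d * (((M:ℝ)+1)^k)⁻¹)
          * (n:ℝ) ^ ((1-(d:ℝ))/2) * (d:ℝ)^n := final_ineq d n M k hd hn1 hM1 hkd hMd
    _ ≤ (4*6^d*(d:ℝ)^d) * (∏ i, ((α i).factorial : ℝ)) * (n:ℝ) ^ ((1-(d:ℝ))/2) * (d:ℝ)^n :=
        mul_le_mul_of_nonneg_right
          (mul_le_mul_of_nonneg_right
            (mul_le_mul_of_nonneg_left hQ (by positivity))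
            (Real.rpow_nonneg hn0.le _))
          (by positivity)
end

section
/- For every d ≥ 1 and multi-index α ∈ ℕ^d with |α| ≥ 1: α! ≥ Γ(|α|/d + 1)^d, where Γ is the Gamma function. -/
/-- Logarithmic convexity of `Γ` yields `α! ≥ Γ(|α|/d + 1)^d` for every
multi-index `α ∈ ℕ^d` with `|α| ≥ 1`. -/
theorem multiindex_factorial_gamma_lower (d : ℕ) (hd : 1 ≤ d) :
    ∀ α : Fin d → ℕ, 1 ≤ ∑ i, α i →
      Real.Gamma (((∑ i, α i : ℕ) : ℝ) / d + 1) ^ d ≤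
        ∏ i, (Nat.factorial (α i) : ℝ) := by
  intro α hα
  have hd0 : (0 : ℝ) < d := by exact_mod_cast hd
  set m : ℝ := ((∑ i, α i : ℕ) : ℝ) / d + 1 with hm
  have hmem : ∀ i ∈ Finset.univ, ((α i : ℝ) + 1) ∈ Set.Ioi (0 : ℝ) := by
    intro i _; exact Set.mem_Ioi.mpr (by positivity)
  have hw : ∑ _i : Fin d, (1 / d : ℝ) = 1 := by
    simp [Finset.sum_const, Finset.card_univ]
    field_simp
  have hsum : ∑ i : Fin d, (1 / d : ℝ) • ((α i : ℝ) + 1) = m := by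
    rw [hm]
    simp only [smul_eq_mul, mul_add, mul_one, Finset.sum_add_distrib, hw, ← Finset.mul_sum]
    push_cast
    ring
  have jensen := Real.convexOn_log_Gamma.map_sum_le
    (t := Finset.univ) (w := fun _ : Fin d => (1 / d : ℝ))
    (p := fun i : Fin d => (α i : ℝ) + 1)
    (fun i _ => by positivity) hw hmem
  rw [hsum] at jensen
  have hmpos : 0 < m := by rw [hm]; positivity
  have hΓpos : 0 < Real.Gamma m := Real.Gamma_pos_of_pos hmpos
  have hΓipos : ∀ i, 0 < Real.Gamma ((α i : ℝ) + 1) := fun i => by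
    exact Real.Gamma_pos_of_pos (by positivity)
  -- d * log Γ m ≤ log ∏ Γ(αᵢ+1)
  have key : (d : ℝ) * Real.log (Real.Gamma m) ≤
      Real.log (∏ i, Real.Gamma ((α i : ℝ) + 1)) := by
    rw [Real.log_prod (fun i _ => (hΓipos i).ne')]
    calc (d : ℝ) * Real.log (Real.Gamma m)
        ≤ (d : ℝ) * ∑ i : Fin d, (1 / d : ℝ) * Real.log (Real.Gamma ((α i : ℝ) + 1)) := by
          apply mul_le_mul_of_nonneg_left _ hd0.le
          simpa [Function.comp] using jensen
      _ = ∑ i : Fin d, Real.log (Real.Gamma ((α i : ℝ) + 1)) := by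
          rw [Finset.mul_sum]; congr 1; ext i; field_simp
  have hprodpos : 0 < ∏ i, Real.Gamma ((α i : ℝ) + 1) :=
    Finset.prod_pos (fun i _ => hΓipos i)
  have h1 : Real.Gamma m ^ d ≤ ∏ i, Real.Gamma ((α i : ℝ) + 1) := by
    have := Real.exp_le_exp.mpr key
    rwa [Real.exp_log hprodpos, ← Real.log_pow, Real.exp_log (by positivity)] at this
  calc Real.Gamma m ^ d ≤ ∏ i, Real.Gamma ((α i : ℝ) + 1) := h1
    _ = ∏ i, (Nat.factorial (α i) : ℝ) := by
        refine Finset.prod_congr rfl fun i _ => ?_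
        exact_mod_cast Real.Gamma_nat_eq_factorial (α i)
end
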